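/- arXiv:1901.02201 — 6 statements merged into one kernel-verified Lean document; each statement's English description precedes it below -/
import Mathlib

section
/- A starlike tree (a tree with exactly one vertex of degree at least 3) has exactly one Laplacian eigenvalue greater than or equal to 4, and this eigenvalue equals 4 if and only if the tree is the star K_{1,3}. -/
/-!
Write `Q(x) = xᵀ L x = ∑_{uv ∈ E} (x_u - x_v)²`. Since `(x_u - x_v)² ≤ 2 x_u² + 2 x_v²`, we get
`Q(x) ≤ 2 ∑_u deg(u) x_u²`; on the hyperplane `x_c = 0` the remaining degrees are at most `2`, so
`Q(x) < 4 ‖x‖²` there (strictly, as the tree is connected). The hyperplane meets the span of any two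
eigenvectors, so at most one eigenvalue is `≥ 4`. The star vector `deg(c) e_c - 𝟙_{N(c)}` has
Rayleigh quotient at least `deg(c) + 1 ≥ 4`, so there is one. If it equals `4`, all Rayleigh
quotients are `≤ 4`, which forces `deg(c) = 3` and no edge leaving the closed neighbourhood of `c`:
the tree is `K_{1,3}`. Conversely, Laplacian eigenvalues never exceed the number of vertices.
-/

open scoped Classical in
/-- Number of Laplacian eigenvalues (with multiplicity) that are `≥ 4`. -/
noncomputable def n4plus {V : Type*} [Fintype V] [DecidableEq V] (G : SimpleGraph V) : ℕ :=
  (Finset.univ.filter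
    fun i => (4:ℝ) ≤ (SimpleGraph.posSemidef_lapMatrix ℝ G).1.eigenvalues i).card

open scoped Classical in
/-- The `j`-th largest Laplacian eigenvalue (1-indexed). -/
noncomputable def eigDesc {V : Type*} [Fintype V] [DecidableEq V] (G : SimpleGraph V) (j : ℕ) : ℝ :=
  ((Finset.univ.val.map (SimpleGraph.posSemidef_lapMatrix ℝ G).1.eigenvalues).sort (· ≤ ·)).getD
    (Fintype.card V - j) 0

open Matrix Finset

namespace Matrix.IsHermitian

variable {n : Type*} [Fintype n] [DecidableEq n] {A : Matrix n n ℝ} (hA : A.IsHermitian)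

lemma dotProduct_eigenvectorBasis (i j : n) :
    ⇑(hA.eigenvectorBasis i) ⬝ᵥ ⇑(hA.eigenvectorBasis j) = if i = j then 1 else 0 := by
  rw [← orthonormal_iff_ite.mp hA.eigenvectorBasis.orthonormal i j,
    EuclideanSpace.inner_eq_star_dotProduct, star_trivial, dotProduct_comm]

lemma sum_eigenvectorBasis_dotProduct_mul (x y : n → ℝ) :
    ∑ i, (⇑(hA.eigenvectorBasis i) ⬝ᵥ x) * (⇑(hA.eigenvectorBasis i) ⬝ᵥ y) = x ⬝ᵥ y := by
  simpa [EuclideanSpace.inner_eq_star_dotProduct, dotProduct_comm] using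
    hA.eigenvectorBasis.sum_inner_mul_inner (WithLp.toLp 2 x) (WithLp.toLp 2 y)

lemma eigenvectorBasis_dotProduct_mulVec (i : n) (x : n → ℝ) :
    ⇑(hA.eigenvectorBasis i) ⬝ᵥ (A *ᵥ x) = hA.eigenvalues i * (⇑(hA.eigenvectorBasis i) ⬝ᵥ x) := by
  have hAT : Aᵀ = A := by simpa using hA.eq
  rw [dotProduct_mulVec, ← mulVec_transpose, hAT, hA.mulVec_eigenvectorBasis, smul_dotProduct,
    smul_eq_mul]

lemma dotProduct_self_eq_sum (x : n → ℝ) :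
    x ⬝ᵥ x = ∑ i, (⇑(hA.eigenvectorBasis i) ⬝ᵥ x) ^ 2 := by
  simp_rw [sq, hA.sum_eigenvectorBasis_dotProduct_mul]

lemma dotProduct_mulVec_eq_sum (x : n → ℝ) :
    x ⬝ᵥ (A *ᵥ x) = ∑ i, hA.eigenvalues i * (⇑(hA.eigenvectorBasis i) ⬝ᵥ x) ^ 2 := by
  rw [← hA.sum_eigenvectorBasis_dotProduct_mul]
  simp_rw [hA.eigenvectorBasis_dotProduct_mulVec]
  congr! 1 with i; ring

lemma mul_dotProduct_self_le_dotProduct_mulVec {r : ℝ} {x : n → ℝ}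
    (h : ∀ i, ⇑(hA.eigenvectorBasis i) ⬝ᵥ x ≠ 0 → r ≤ hA.eigenvalues i) :
    r * (x ⬝ᵥ x) ≤ x ⬝ᵥ (A *ᵥ x) := by
  rw [hA.dotProduct_self_eq_sum, hA.dotProduct_mulVec_eq_sum, mul_sum]
  refine sum_le_sum fun i _ => ?_
  by_cases hi : ⇑(hA.eigenvectorBasis i) ⬝ᵥ x = 0
  · simp [hi]
  · exact mul_le_mul_of_nonneg_right (h i hi) (sq_nonneg _)

lemma dotProduct_mulVec_le_mul_dotProduct_self {r : ℝ} (h : ∀ i, hA.eigenvalues i ≤ r)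
    (x : n → ℝ) : x ⬝ᵥ (A *ᵥ x) ≤ r * (x ⬝ᵥ x) := by
  rw [hA.dotProduct_self_eq_sum, hA.dotProduct_mulVec_eq_sum, mul_sum]
  exact sum_le_sum fun i _ => mul_le_mul_of_nonneg_right (h i) (sq_nonneg _)

lemma exists_le_eigenvalues_of_mul_dotProduct_self_le {r : ℝ} {x : n → ℝ} (hx : x ≠ 0)
    (h : r * (x ⬝ᵥ x) ≤ x ⬝ᵥ (A *ᵥ x)) : ∃ i, r ≤ hA.eigenvalues i := by
  by_contra! hlt
  obtain ⟨i, hi⟩ : ∃ i, ⇑(hA.eigenvectorBasis i) ⬝ᵥ x ≠ 0 := by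
    by_contra! h0
    exact hx (dotProduct_self_eq_zero.mp (by simp [hA.dotProduct_self_eq_sum, h0]))
  refine h.not_gt ?_
  rw [hA.dotProduct_self_eq_sum, hA.dotProduct_mulVec_eq_sum, mul_sum]
  refine sum_lt_sum (fun j _ => mul_le_mul_of_nonneg_right (hlt j).le (sq_nonneg _))
    ⟨i, mem_univ i, mul_lt_mul_of_pos_right (hlt i) (by positivity)⟩

lemma eigenvalues_le_of_forall_dotProduct_mulVec_le {r : ℝ}
    (h : ∀ x, x ⬝ᵥ (A *ᵥ x) ≤ r * (x ⬝ᵥ x)) (i : n) : hA.eigenvalues i ≤ r := by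
  simpa [hA.mulVec_eigenvectorBasis, hA.dotProduct_eigenvectorBasis] using
    h (hA.eigenvectorBasis i)

lemma eq_of_le_eigenvalues {r : ℝ} (c : n)
    (h : ∀ x, x ≠ 0 → x c = 0 → x ⬝ᵥ (A *ᵥ x) < r * (x ⬝ᵥ x)) {i j : n}
    (hi : r ≤ hA.eigenvalues i) (hj : r ≤ hA.eigenvalues j) : i = j := by
  by_contra hij
  set v := fun k => ⇑(hA.eigenvectorBasis k)
  obtain ⟨y, hy0, hyc, hy⟩ : ∃ y : n → ℝ, y ≠ 0 ∧ y c = 0 ∧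
      ∀ k, v k ⬝ᵥ y ≠ 0 → k = i ∨ k = j := by
    by_cases hic : v i c = 0
    · refine ⟨v i, fun h0 => ?_, hic, fun k hk => .inl ?_⟩
      · have hii := hA.dotProduct_eigenvectorBasis i i
        simp_all [v]
      · by_contra hki
        simp [v, hA.dotProduct_eigenvectorBasis, hki] at hk
    · refine ⟨v j c • v i - v i c • v j, fun h0 => hic ?_, by simp; ring, fun k hk => ?_⟩
      · simpa [v, dotProduct_sub, hA.dotProduct_eigenvectorBasis, hij, Ne.symm hij] using
          congrArg (v j ⬝ᵥ ·) h0
      · by_contra! hk'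
        simp [v, dotProduct_sub, hA.dotProduct_eigenvectorBasis, hk'.1, hk'.2] at hk
  refine (h y hy0 hyc).not_ge (hA.mul_dotProduct_self_le_dotProduct_mulVec fun k hk => ?_)
  rcases hy k hk with rfl | rfl
  exacts [hi, hj]

end Matrix.IsHermitian

namespace SimpleGraph

section

variable {V : Type*}

lemma sq_eq_sq_of_reachable {G : SimpleGraph V} {x : V → ℝ}
    (h : ∀ u v, G.Adj u v → x u = -x v) {u v : V} (huv : G.Reachable u v) :
    x u ^ 2 = x v ^ 2 := by
  obtain ⟨p⟩ := huv
  induction p with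
  | nil => rfl
  | cons hadj _ ih => rw [h _ _ hadj, neg_sq, ih]

lemma eq_starGraph_of_forall_adj_adj {G : SimpleGraph V} (hconn : G.Connected) (c : V)
    (h : ∀ w, G.Adj c w → ∀ e, G.Adj w e → e = c) : G = starGraph c := by
  have hstar : ∀ v, v = c ∨ G.Adj c v := by
    intro v
    obtain ⟨p⟩ := hconn.preconnected v c
    induction p with
    | nil => exact .inl rfl
    | cons hab _ ih =>
      rcases ih h with rfl | hcb
      exacts [.inr hab.symm, .inl (h _ hcb _ hab.symm)]
  ext u v
  rw [starGraph_adj]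
  refine ⟨fun huv => ⟨G.ne_of_adj huv, ?_⟩, ?_⟩
  · rcases hstar u with hu | hcu
    · exact .inl hu
    · exact .inr (h u hcu v huv)
  · rintro ⟨huv, rfl | rfl⟩
    exacts [(hstar v).resolve_left huv.symm, ((hstar u).resolve_left huv).symm]

variable [DecidableEq V]

def starGraphIso (r : V) : starGraph r ≃g completeBipartiteGraph Unit {v // v ≠ r} where
  toFun v := if h : v = r then .inl () else .inr ⟨v, h⟩
  invFun := Sum.elim (fun _ => r) Subtype.val
  left_inv v := by by_cases h : v = r <;> simp [h]
  right_inv := by rintro (⟨⟩ | ⟨v, hv⟩) <;> simp_all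
  map_rel_iff' {u v} := by
    by_cases hu : u = r <;> by_cases hv : v = r <;> aesop

end

variable {V : Type*} [Fintype V] (G : SimpleGraph V) [DecidableRel G.Adj]

lemma sum_sum_neighborFinset_eq_sum_degree_smul {M : Type*} [AddCommMonoid M] (f : V → M) :
    ∑ u, ∑ v ∈ G.neighborFinset u, f v = ∑ v, G.degree v • f v := by
  simp_rw [← card_neighborFinset_eq_degree, ← sum_const, neighborFinset_eq_filter, sum_filter]
  rw [sum_comm]
  simp_rw [G.adj_comm]

variable {G} in
lemma sum_sum_neighborFinset_add_sq_pos (hconn : G.Connected) {c : V} {x : V → ℝ}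
    (hx : x ≠ 0) (hxc : x c = 0) : 0 < ∑ u, ∑ v ∈ G.neighborFinset u, (x u + x v) ^ 2 := by
  refine (sum_nonneg fun _ _ => sum_nonneg fun _ _ => sq_nonneg _).lt_of_ne fun h0 => hx ?_
  have hanti : ∀ u v, G.Adj u v → x u = -x v := by
    intro u v huv
    have hrow := (sum_eq_zero_iff_of_nonneg fun _ _ => sum_nonneg fun _ _ => sq_nonneg _).mp
      h0.symm u (mem_univ u)
    have hterm := (sum_eq_zero_iff_of_nonneg fun _ _ => sq_nonneg _).mp hrow v
      ((G.mem_neighborFinset u v).mpr huv)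
    linarith [pow_eq_zero_iff two_ne_zero |>.mp hterm]
  funext u
  simpa [hxc] using sq_eq_sq_of_reachable hanti (hconn u c)

variable [DecidableEq V]

lemma two_mul_dotProduct_lapMatrix_mulVec (x : V → ℝ) :
    2 * (x ⬝ᵥ (G.lapMatrix ℝ *ᵥ x)) = ∑ u, ∑ v ∈ G.neighborFinset u, (x u - x v) ^ 2 := by
  rw [← toLinearMap₂'_apply', lapMatrix_toLinearMap₂', mul_div_cancel₀ _ two_ne_zero]
  simp_rw [neighborFinset_eq_filter, sum_filter]

lemma dotProduct_lapMatrix_mulVec_le_card_mul (x : V → ℝ) :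
    x ⬝ᵥ (G.lapMatrix ℝ *ᵥ x) ≤ Fintype.card V * (x ⬝ᵥ x) := by
  have hsub : 2 * (x ⬝ᵥ (G.lapMatrix ℝ *ᵥ x)) ≤ ∑ u, ∑ v, (x u - x v) ^ 2 := by
    rw [G.two_mul_dotProduct_lapMatrix_mulVec]
    exact sum_le_sum fun u _ => sum_le_sum_of_subset_of_nonneg (subset_univ _)
      fun _ _ _ => sq_nonneg _
  have hall : ∑ u, ∑ v, (x u - x v) ^ 2
      = 2 * (Fintype.card V * (x ⬝ᵥ x)) - 2 * (∑ v, x v) ^ 2 := by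
    simp only [sub_sq, sum_add_distrib, sum_sub_distrib, sum_const, card_univ, nsmul_eq_mul,
      ← mul_sum, ← sum_mul, dotProduct, ← sq]
    ring
  nlinarith [sq_nonneg (∑ v, x v)]

lemma lapMatrix_eigenvalues_le_card (i : V) :
    (G.isHermitian_lapMatrix ℝ).eigenvalues i ≤ Fintype.card V :=
  (G.isHermitian_lapMatrix ℝ).eigenvalues_le_of_forall_dotProduct_mulVec_le
    G.dotProduct_lapMatrix_mulVec_le_card_mul i

lemma two_mul_dotProduct_lapMatrix_mulVec_add_sum_sq (x : V → ℝ) :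
    2 * (x ⬝ᵥ (G.lapMatrix ℝ *ᵥ x)) + ∑ u, ∑ v ∈ G.neighborFinset u, (x u + x v) ^ 2
      = 4 * ∑ u, G.degree u * x u ^ 2 := by
  have hsq : ∀ u v, (x u - x v) ^ 2 + (x u + x v) ^ 2 = 2 * x u ^ 2 + 2 * x v ^ 2 :=
    fun u v => by ring
  simp_rw [G.two_mul_dotProduct_lapMatrix_mulVec, ← sum_add_distrib, hsq, sum_add_distrib,
    G.sum_sum_neighborFinset_eq_sum_degree_smul (fun v => 2 * x v ^ 2), sum_const, card_neighborFinset_eq_degree,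
    nsmul_eq_mul, ← sum_add_distrib, mul_sum]
  exact sum_congr rfl fun _ _ => by ring

variable {G} in
lemma dotProduct_lapMatrix_mulVec_lt (hconn : G.Connected) {c : V} {d : ℕ}
    (hdeg : ∀ v, v ≠ c → G.degree v ≤ d) {x : V → ℝ} (hx : x ≠ 0) (hxc : x c = 0) :
    x ⬝ᵥ (G.lapMatrix ℝ *ᵥ x) < 2 * d * (x ⬝ᵥ x) := by
  have hdegsum : ∑ u, G.degree u * x u ^ 2 ≤ d * (x ⬝ᵥ x) := by
    rw [dotProduct, mul_sum]
    refine sum_le_sum fun u _ => ?_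
    rcases eq_or_ne u c with rfl | hu
    · simp [hxc]
    · rw [← sq]
      exact mul_le_mul_of_nonneg_right (by exact_mod_cast hdeg u hu) (sq_nonneg _)
  linarith [G.two_mul_dotProduct_lapMatrix_mulVec_add_sum_sq x,
    sum_sum_neighborFinset_add_sq_pos hconn hx hxc]

def starVector (c : V) : V → ℝ := fun v => if v = c then G.degree c else if G.Adj c v then -1 else 0

variable {G}

section StarVector

variable {c : V}

lemma starVector_ne_zero (hc : 0 < G.degree c) : G.starVector c ≠ 0 := fun h => by
  simpa [starVector, hc.ne'] using congrFun h c

lemma starVector_dotProduct_self :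
    G.starVector c ⬝ᵥ G.starVector c = G.degree c * (G.degree c + 1) := by
  have hsq : ∀ v, G.starVector c v * G.starVector c v
      = (if c = v then (G.degree c : ℝ) ^ 2 else 0) + if G.Adj c v then 1 else 0 := by
    intro v
    by_cases hv : c = v
    · simp [starVector, ← hv, sq]
    · by_cases hcv : G.Adj c v <;> simp [starVector, Ne.symm hv, hv, hcv]
  rw [dotProduct, sum_congr rfl fun v _ => hsq v, sum_add_distrib, sum_ite_eq, if_pos (mem_univ c),
    ← degree_eq_sum_if_adj]
  ring

lemma le_two_mul_dotProduct_lapMatrix_mulVec_starVector :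
    2 * (G.degree c * (G.degree c + 1) ^ 2) + ∑ t ∈ G.neighborFinset c,
        ∑ v ∈ (G.neighborFinset t).erase c, (G.starVector c t - G.starVector c v) ^ 2
      ≤ 2 * (G.starVector c ⬝ᵥ (G.lapMatrix ℝ *ᵥ G.starVector c)) := by
  set x := G.starVector c
  have hcc : c ∉ G.neighborFinset c := by simp
  have hxc : x c = G.degree c := by simp [x, starVector]
  have hxt : ∀ t ∈ G.neighborFinset c, x t = -1 := fun t ht => by
    simp [x, starVector, G.ne_of_adj ((G.mem_neighborFinset c t).mp ht) |>.symm,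
      (G.mem_neighborFinset c t).mp ht]
  have hrow_c : ∑ v ∈ G.neighborFinset c, (x c - x v) ^ 2 = G.degree c * (G.degree c + 1) ^ 2 := by
    rw [sum_congr rfl fun v hv => by rw [hxc, hxt v hv], sum_const, card_neighborFinset_eq_degree,
      nsmul_eq_mul]
    ring
  have hrow_t : ∀ t ∈ G.neighborFinset c, ∑ v ∈ G.neighborFinset t, (x t - x v) ^ 2
      = (G.degree c + 1) ^ 2 + ∑ v ∈ (G.neighborFinset t).erase c, (x t - x v) ^ 2 := by
    intro t ht
    have hct : c ∈ G.neighborFinset t := by simpa [adj_comm] using ht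
    rw [← add_sum_erase _ _ hct, hxc, hxt t ht]
    ring
  rw [G.two_mul_dotProduct_lapMatrix_mulVec]
  calc _ = ∑ u ∈ insert c (G.neighborFinset c), ∑ v ∈ G.neighborFinset u, (x u - x v) ^ 2 := by
        rw [sum_insert hcc, hrow_c, sum_congr rfl hrow_t, sum_add_distrib, sum_const,
          card_neighborFinset_eq_degree, nsmul_eq_mul]
        ring
    _ ≤ _ := sum_le_sum_of_subset_of_nonneg (subset_univ _)
        fun _ _ _ => sum_nonneg fun _ _ => sq_nonneg _

lemma degree_add_one_mul_le_dotProduct_lapMatrix_mulVec_starVector :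
    (G.degree c + 1) * (G.starVector c ⬝ᵥ G.starVector c)
      ≤ G.starVector c ⬝ᵥ (G.lapMatrix ℝ *ᵥ G.starVector c) := by
  have hrest : 0 ≤ ∑ t ∈ G.neighborFinset c,
      ∑ v ∈ (G.neighborFinset t).erase c, (G.starVector c t - G.starVector c v) ^ 2 :=
    sum_nonneg fun _ _ => sum_nonneg fun _ _ => sq_nonneg _
  rw [starVector_dotProduct_self]
  nlinarith [le_two_mul_dotProduct_lapMatrix_mulVec_starVector (G := G) (c := c)]

lemma degree_add_one_mul_lt_dotProduct_lapMatrix_mulVec_starVector {w e : V} (hw : G.Adj c w)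
    (he : G.Adj w e) (hec : e ≠ c) (hce : ¬ G.Adj c e) :
    (G.degree c + 1) * (G.starVector c ⬝ᵥ G.starVector c)
      < G.starVector c ⬝ᵥ (G.lapMatrix ℝ *ᵥ G.starVector c) := by
  set x := G.starVector c
  have hrest :
      1 ≤ ∑ t ∈ G.neighborFinset c, ∑ v ∈ (G.neighborFinset t).erase c, (x t - x v) ^ 2 := by
    have hwe : (x w - x e) ^ 2 = 1 := by
      simp [x, starVector, hw, hec, hce, (G.ne_of_adj hw).symm]
    calc (1 : ℝ) ≤ ∑ v ∈ (G.neighborFinset w).erase c, (x w - x v) ^ 2 :=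
          hwe ▸ single_le_sum (f := fun v => (x w - x v) ^ 2) (fun _ _ => sq_nonneg _)
            (mem_erase.mpr ⟨hec, (G.mem_neighborFinset w e).mpr he⟩)
      _ ≤ _ := single_le_sum (f := fun t => ∑ v ∈ (G.neighborFinset t).erase c, (x t - x v) ^ 2)
          (fun _ _ => sum_nonneg fun _ _ => sq_nonneg _) ((G.mem_neighborFinset c w).mpr hw)
  rw [starVector_dotProduct_self]
  nlinarith [le_two_mul_dotProduct_lapMatrix_mulVec_starVector (G := G) (c := c)]

end StarVector

lemma exists_degree_add_one_le_lapMatrix_eigenvalues {c : V} (hc : 0 < G.degree c) :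
    ∃ i, G.degree c + 1 ≤ (G.isHermitian_lapMatrix ℝ).eigenvalues i :=
  (G.isHermitian_lapMatrix ℝ).exists_le_eigenvalues_of_mul_dotProduct_self_le
    (starVector_ne_zero hc) degree_add_one_mul_le_dotProduct_lapMatrix_mulVec_starVector

lemma IsTree.nonempty_iso_of_dotProduct_lapMatrix_mulVec_le (hT : G.IsTree) {c : V}
    (hc : 3 ≤ G.degree c) (h : ∀ x, x ⬝ᵥ (G.lapMatrix ℝ *ᵥ x) ≤ 4 * (x ⬝ᵥ x)) :
    Nonempty (G ≃g completeBipartiteGraph (Fin 1) (Fin 3)) := by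
  have hxx : 0 < G.starVector c ⬝ᵥ G.starVector c := by
    rw [starVector_dotProduct_self]; positivity
  have hdeg : G.degree c = 3 := by
    have hle := degree_add_one_mul_le_dotProduct_lapMatrix_mulVec_starVector.trans
      (h (G.starVector c))
    have hle3 : (G.degree c : ℝ) ≤ 3 := by nlinarith
    exact_mod_cast le_antisymm hle3 (by exact_mod_cast hc)
  have hleaf : ∀ w, G.Adj c w → ∀ e, G.Adj w e → e = c := by
    intro w hw e he
    by_contra hec
    have hce : ¬ G.Adj c e := fun hce =>
      isIndepSet_neighborSet_of_triangleFree G (hT.isAcyclic.cliqueFree le_rfl) c hw hce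
        (G.ne_of_adj he) he
    have hlt := (degree_add_one_mul_lt_dotProduct_lapMatrix_mulVec_starVector hw he hec hce).trans_le
      (h (G.starVector c))
    rw [hdeg] at hlt
    norm_num at hlt
  have hG := eq_starGraph_of_forall_adj_adj hT.connected c hleaf
  subst hG
  have hcard : Fintype.card {v // v ≠ c} = 3 := by
    rw [← hdeg, ← card_neighborFinset_eq_degree, neighborFinset_eq_filter, Fintype.card_subtype]
    congr! 2 with v
    simp [eq_comm]
  exact ⟨(starGraphIso c).trans (completeBipartiteGraphCongr (Equiv.ofUnique _ _)
    (Fintype.equivFinOfCardEq hcard))⟩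

end SimpleGraph

open SimpleGraph

-- `n4plus` is elaborated with the classical `DecidableRel G.Adj` instance.
lemma n4plus_eq_card {V : Type*} [Fintype V] [DecidableEq V] (G : SimpleGraph V)
    [DecidableRel G.Adj] :
    n4plus G = #{i | 4 ≤ (G.isHermitian_lapMatrix ℝ).eigenvalues i} := by
  unfold n4plus
  congr!

/-- a starlike tree has exactly one Laplacian eigenvalue `≥ 4`, and this
eigenvalue equals `4` iff the tree is `K_{1,3}`. -/
theorem starlike_tree_spectrum {V : Type*} [Fintype V] [DecidableEq V]
    (G : SimpleGraph V) [DecidableRel G.Adj] (hT : G.IsTree)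
    (c : V) (hc : 3 ≤ G.degree c) (huniq : ∀ v : V, 3 ≤ G.degree v → v = c) :
    n4plus G = 1 ∧
      ∀ i, 4 ≤ (SimpleGraph.posSemidef_lapMatrix ℝ G).1.eigenvalues i →
        ((SimpleGraph.posSemidef_lapMatrix ℝ G).1.eigenvalues i = 4 ↔
          Nonempty (G ≃g completeBipartiteGraph (Fin 1) (Fin 3))) := by
  set hL := G.isHermitian_lapMatrix ℝ
  have hdeg : ∀ v, v ≠ c → G.degree v ≤ 2 := fun v hv => by
    by_contra! h
    exact hv (huniq v h)
  have hunique : ∀ i j, 4 ≤ hL.eigenvalues i → 4 ≤ hL.eigenvalues j → i = j :=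
    fun i j => hL.eq_of_le_eigenvalues c fun x hx hxc =>
      (dotProduct_lapMatrix_mulVec_lt hT.connected hdeg hx hxc).trans_eq (by norm_num)
  obtain ⟨i₀, hi₀⟩ : ∃ i, 4 ≤ hL.eigenvalues i := by
    obtain ⟨i, hi⟩ := exists_degree_add_one_le_lapMatrix_eigenvalues (by omega : 0 < G.degree c)
    exact ⟨i, le_trans (by norm_cast; omega) hi⟩
  refine ⟨?_, fun i hi => ⟨fun h4 => ?_, fun ⟨φ⟩ => ?_⟩⟩
  · rw [n4plus_eq_card, card_eq_one]
    exact ⟨i₀, eq_singleton_iff_unique_mem.mpr ⟨by simpa using hi₀,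
      fun j hj => hunique j i₀ (by simpa using hj) hi₀⟩⟩
  · refine hT.nonempty_iso_of_dotProduct_lapMatrix_mulVec_le hc
      (hL.dotProduct_mulVec_le_mul_dotProduct_self fun j => ?_)
    by_contra! hj
    exact hj.ne' (hunique j i hj.le hi ▸ h4)
  · have hcard : Fintype.card V = 4 := by simpa using Fintype.card_congr φ.toEquiv
    exact le_antisymm ((G.lapMatrix_eigenvalues_le_card i).trans_eq (by rw [hcard]; norm_num)) hi
end

section
/- Let A_n be the n×n complex tridiagonal matrix (n ≥ 2) with diagonal (γ+b, b, ..., b, b+δ), subdiagonal constant a, and superdiagonal constant c, where ac ≠ 0. Then every eigenvalue of A_n has the form λ = b + 2√a√c·cos θ, where θ ∈ ℂ satisfies ac·sin((n+1)θ) − √a√c(γ+δ)·sin(nθ) + γδ·sin((n−1)θ) = 0 if sin θ ≠ 0, or ac·(n+1) − cos θ·√a√c(γ+δ)·n + γδ·(n−1) = 0 if sin θ = 0. -/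
/-!
Let `v` be an eigenvector for `μ` and write `μ = b + 2√a√c cos θ`. Rescaling the coordinates by
`(√c/√a)^j` turns the interior rows into the recurrence `u_{j+2} = 2 cos θ · u_{j+1} - u_j`, and
the first row fixes the solution up to the factor `v₀ ≠ 0` as `√a√c U_j - γ U_{j-1}`, with `U_j`
the Chebyshev polynomials of the second kind at `cos θ`. The last row then becomes the
characteristic equation `ac U_n - √a√c (γ+δ) U_{n-1} + γδ U_{n-2} = 0`, which reads as the
stated sine equation through `U_j(cos θ) sin θ = sin ((j+1)θ)`, and, when `cos θ = ±1`, through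
`U_j(±1) = (j+1)(±1)^j`.
-/

open Polynomial Polynomial.Chebyshev Matrix Complex

namespace Polynomial.Chebyshev

theorem U_eval_of_sq_eq_one {K : Type*} [Field K] {ε : K} (hε : ε ^ 2 = 1) (n : ℤ) :
    (U K n).eval ε = (n + 1) * ε ^ n := by
  have hε0 : ε ≠ 0 := by rintro rfl; simp at hε
  have hinv : ε⁻¹ = ε := inv_eq_of_mul_eq_one_right (by rw [← sq, hε])
  induction n using Polynomial.Chebyshev.induct with
  | zero => simp
  | one => simp only [U_one, eval_mul, eval_X, eval_ofNat, zpow_one]; push_cast; ring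
  | add_two n ih1 ih2 =>
    simp only [U_add_two, eval_sub, eval_mul, eval_X, eval_ofNat, ih1, ih2,
      zpow_add₀ hε0, zpow_natCast, zpow_one, zpow_two]
    push_cast
    linear_combination (n + 1 : K) * ε ^ n * hε
  | neg_add_one n ih1 ih2 =>
    simp only [U_sub_one, eval_sub, eval_mul, eval_X, eval_ofNat, ih1, ih2, zpow_add₀ hε0,
      zpow_sub₀ hε0, _root_.zpow_neg, zpow_natCast, zpow_one, ← inv_pow, div_eq_mul_inv, hinv]
    push_cast
    ring

theorem sin_three_term_eq_zero_of_U_eval_cos {α β η θ : ℂ} (n : ℤ)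
    (h : α * (U ℂ n).eval (cos θ) - β * (U ℂ (n - 1)).eval (cos θ)
      + η * (U ℂ (n - 2)).eval (cos θ) = 0) :
    α * sin ((n + 1) * θ) - β * sin (n * θ) + η * sin ((n - 1) * θ) = 0 := by
  have h₀ := U_complex_cos θ n
  have h₁ := U_complex_cos θ (n - 1)
  have h₂ := U_complex_cos θ (n - 2)
  push_cast at h₁ h₂
  rw [sub_add_cancel] at h₁
  rw [show (n : ℂ) - 2 + 1 = n - 1 by ring] at h₂
  linear_combination sin θ * h - α * h₀ + β * h₁ - η * h₂

theorem three_term_eq_zero_of_U_eval_of_sq_eq_one {K : Type*} [Field K] {α β η ε : K}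
    (hε : ε ^ 2 = 1) (n : ℤ)
    (h : α * (U K n).eval ε - β * (U K (n - 1)).eval ε + η * (U K (n - 2)).eval ε = 0) :
    α * (n + 1) - β * ε * n + η * (n - 1) = 0 := by
  have hε0 : ε ≠ 0 := by rintro rfl; simp at hε
  have hinv : ε⁻¹ = ε := inv_eq_of_mul_eq_one_right (by rw [← sq, hε])
  simp only [U_eval_of_sq_eq_one hε, zpow_sub₀ hε0, zpow_one, zpow_two, div_eq_mul_inv,
    mul_inv, hinv] at h
  push_cast at h
  have key : ε ^ n * (α * (n + 1) - β * ε * n + η * (n - 1)) = 0 := by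
    linear_combination h - (n - 1 : K) * η * ε ^ n * hε
  exact (mul_eq_zero.mp key).resolve_left (zpow_ne_zero n hε0)

/-- For `p = √a`, `q = √c` this says that `(q/p)^j V j = V 0 (pq U_j - γ U_{j-1}) / (pq)`,
stated without division. -/
theorem closed_form_of_boundary_recurrence {R : Type*} [CommRing R] {p q x γ : R} {N : ℕ}
    {V : ℕ → R}
    (hfirst : q ^ 2 * V 1 = (2 * p * q * x - γ) * V 0)
    (hmid : ∀ k, k + 2 < N → p ^ 2 * V k + q ^ 2 * V (k + 2) = 2 * p * q * x * V (k + 1))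
    (j : ℕ) (hj : j < N) :
    p * q * q ^ j * V j = p ^ j * V 0 * (p * q * (U R j).eval x - γ * (U R (j - 1)).eval x) := by
  induction j using Nat.twoStepInduction with
  | zero => simp [mul_comm]
  | one =>
    simp only [pow_one, Nat.cast_one, sub_self, U_one, U_zero, eval_mul, eval_ofNat, eval_X,
      eval_one]
    linear_combination p * hfirst
  | more k ih₀ ih₁ =>
    specialize ih₀ (by omega)
    specialize ih₁ (by omega)
    push_cast at ih₁ ⊢
    rw [add_sub_cancel_right] at ih₁
    have hU : (U R (k + 1)).eval x = 2 * x * (U R k).eval x - (U R (k - 1)).eval x := by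
      simp [U_add_one]
    rw [show (k : ℤ) + 2 - 1 = k + 1 by ring, U_add_two]
    simp only [eval_sub, eval_mul, eval_X, eval_ofNat]
    linear_combination (p * q * q ^ k) * hmid k hj + 2 * p * x * ih₁ - p ^ 2 * ih₀
      + γ * p ^ (k + 2) * V 0 * hU

theorem char_eq_zero_of_boundary_recurrence {K : Type*} [Field K] {p q x γ δ : K}
    (hp : p ≠ 0) (hq : q ≠ 0) {N : ℕ} (hN : 2 ≤ N) {V : ℕ → K}
    (hfirst : q ^ 2 * V 1 = (2 * p * q * x - γ) * V 0)
    (hmid : ∀ k, k + 2 < N → p ^ 2 * V k + q ^ 2 * V (k + 2) = 2 * p * q * x * V (k + 1))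
    (hlast : p ^ 2 * V (N - 2) = (2 * p * q * x - δ) * V (N - 1))
    (hV : ∃ j < N, V j ≠ 0) :
    (p * q) ^ 2 * (U K N).eval x - p * q * (γ + δ) * (U K (N - 1)).eval x
      + γ * δ * (U K (N - 2)).eval x = 0 := by
  have hclosed := closed_form_of_boundary_recurrence hfirst hmid
  have hV0 : V 0 ≠ 0 := by
    obtain ⟨j, hj, hVj⟩ := hV
    intro h0
    simpa [h0, hp, hq, hVj] using hclosed j hj
  obtain ⟨m, rfl⟩ : ∃ m, N = m + 2 := ⟨N - 2, by omega⟩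
  have hm := hclosed m (by omega)
  have hm₁ := hclosed (m + 1) (by omega)
  simp only [Nat.add_sub_cancel, show m + 2 - 1 = m + 1 by omega] at hlast
  push_cast at hm₁ ⊢
  rw [add_sub_cancel_right] at hm₁
  rw [show (m : ℤ) + 2 - 1 = m + 1 by ring, add_sub_cancel_right, U_add_two]
  have hU : (U K (m - 1)).eval x = 2 * x * (U K m).eval x - (U K (m + 1)).eval x := by
    simp [U_sub_one]
  simp only [eval_sub, eval_mul, eval_X, eval_ofNat]
  -- the last row, with `V m` and `V (m + 1)` replaced by their closed forms
  have key : p ^ (m + 1) * V 0 * ((p * q) ^ 2 * (2 * x * (U K (m + 1)).eval x - (U K m).eval x)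
      - p * q * (γ + δ) * (U K (m + 1)).eval x + γ * δ * (U K m).eval x) = 0 := by
    linear_combination -(p * q * q ^ (m + 1)) * hlast + p ^ 2 * q * hm
      - (2 * p * q * x - δ) * hm₁ - p ^ (m + 2) * q * γ * V 0 * hU
  exact (mul_eq_zero.mp key).resolve_left (mul_ne_zero (pow_ne_zero _ hp) hV0)

end Polynomial.Chebyshev

section

variable {α : Type*}

def Fin.extendByZero [Zero α] {n : ℕ} (v : Fin n → α) (j : ℕ) : α :=
  if h : j < n then v ⟨j, h⟩ else 0

@[simp]
theorem Fin.extendByZero_val [Zero α] {n : ℕ} (v : Fin n → α) (i : Fin n) :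
    Fin.extendByZero v i = v i := by
  simp [Fin.extendByZero]

theorem Fin.extendByZero_of_le [Zero α] {n : ℕ} (v : Fin n → α) {j : ℕ} (hj : n ≤ j) :
    Fin.extendByZero v j = 0 :=
  dif_neg (by omega)

theorem Fin.sum_ite_val_eq [AddCommMonoid α] {n : ℕ} (v : Fin n → α) (m : ℕ) :
    ∑ j : Fin n, (if (j : ℕ) = m then v j else 0) = Fin.extendByZero v m := by
  by_cases hm : m < n
  · rw [Finset.sum_eq_single ⟨m, hm⟩ (fun j _ hj => if_neg fun h => hj (Fin.ext h)) (by simp)]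
    simp [Fin.extendByZero, hm]
  · rw [Fin.extendByZero_of_le v (not_lt.mp hm)]
    exact Finset.sum_eq_zero fun j _ => if_neg (by omega)

end

theorem Matrix.exists_mulVec_eq_smul_of_mem_spectrum {K ι : Type*} [Field K] [Fintype ι]
    [DecidableEq ι] {A : Matrix ι ι K} {μ : K} (hμ : μ ∈ spectrum K A) :
    ∃ v ≠ 0, A *ᵥ v = μ • v := by
  rw [← Matrix.spectrum_toLin', ← Module.End.hasEigenvalue_iff_mem_spectrum] at hμ
  obtain ⟨v, hv⟩ := hμ.exists_hasEigenvector
  exact ⟨v, hv.2, by simpa using hv.apply_eq_smul⟩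

section

variable {R : Type*} [CommRing R]

def Matrix.tridiagonalWithCorners (n : ℕ) (a b c γ δ : R) : Matrix (Fin n) (Fin n) R :=
  Matrix.of fun i j =>
    if (i : ℕ) = (j : ℕ) then
      (if (i : ℕ) = 0 then γ + b else if (i : ℕ) = n - 1 then b + δ else b)
    else if (i : ℕ) + 1 = (j : ℕ) then c
    else if (j : ℕ) + 1 = (i : ℕ) then a
    else 0

theorem Matrix.tridiagonalWithCorners_mulVec_apply {n : ℕ} (a b c γ δ : R) (v : Fin n → R)
    (i : Fin n) :
    (tridiagonalWithCorners n a b c γ δ *ᵥ v) i =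
      (if (i : ℕ) = 0 then 0 else a * Fin.extendByZero v (i - 1))
      + (if (i : ℕ) = 0 then γ + b else if (i : ℕ) = n - 1 then b + δ else b)
        * Fin.extendByZero v i
      + c * Fin.extendByZero v (i + 1) := by
  have hentry : ∀ j, tridiagonalWithCorners n a b c γ δ i j * v j =
      (if (i : ℕ) = 0 then 0 else a * if (j : ℕ) = i - 1 then v j else 0)
      + (if (i : ℕ) = 0 then γ + b else if (i : ℕ) = n - 1 then b + δ else b)
        * (if (j : ℕ) = i then v j else 0)
      + c * (if (j : ℕ) = i + 1 then v j else 0) := by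
    intro j
    simp only [tridiagonalWithCorners, Matrix.of_apply]
    split_ifs <;> first | ring1 | omega
  simp only [Matrix.mulVec, dotProduct, hentry, Finset.sum_add_distrib, Finset.sum_ite_irrel,
    Finset.sum_const_zero, ← Finset.mul_sum, Fin.sum_ite_val_eq]

theorem Matrix.tridiagonalWithCorners_eigenvector_rows {n : ℕ} (hn : 2 ≤ n) {a b c γ δ μ : R}
    {v : Fin n → R} (hv : tridiagonalWithCorners n a b c γ δ *ᵥ v = μ • v) :
    c * Fin.extendByZero v 1 = (μ - b - γ) * Fin.extendByZero v 0 ∧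
    (∀ k, k + 2 < n → a * Fin.extendByZero v k + c * Fin.extendByZero v (k + 2)
      = (μ - b) * Fin.extendByZero v (k + 1)) ∧
    a * Fin.extendByZero v (n - 2) = (μ - b - δ) * Fin.extendByZero v (n - 1) := by
  have row (i : Fin n) := congrFun hv i
  simp only [tridiagonalWithCorners_mulVec_apply, Pi.smul_apply, smul_eq_mul,
    ← Fin.extendByZero_val v] at row
  refine ⟨?_, fun k hk => ?_, ?_⟩
  · have h := row ⟨0, by omega⟩
    simp only [if_true] at h
    linear_combination h
  · have h := row ⟨k + 1, by omega⟩
    simp only [show k + 1 ≠ 0 by omega, show k + 1 ≠ n - 1 by omega, if_false,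
      Nat.add_sub_cancel] at h
    linear_combination h
  · have h := row ⟨n - 1, by omega⟩
    simp only [show n - 1 ≠ 0 by omega, if_true, if_false, show n - 1 - 1 = n - 2 by omega,
      show n - 1 + 1 = n by omega, Fin.extendByZero_of_le v le_rfl] at h
    linear_combination h

end

/-- every eigenvalue of the `n×n` tridiagonal matrix with diagonal
`(γ+b, b, …, b, b+δ)`, subdiagonal `a` and superdiagonal `c` (`ac ≠ 0`) has the form
`b + 2√a√c·cos θ` with `θ` satisfying the stated transcendental equation. -/
theorem tridiagonal_eigenvalues (n : ℕ) (hn : 2 ≤ n) (a b c γ δ : ℂ) (hac : a * c ≠ 0)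
    (sqa sqc : ℂ) (hsqa : sqa ^ 2 = a) (hsqc : sqc ^ 2 = c)
    (A : Matrix (Fin n) (Fin n) ℂ)
    (hA : ∀ i j : Fin n, A i j =
      if (i : ℕ) = (j : ℕ) then
        (if (i : ℕ) = 0 then γ + b else if (i : ℕ) = n - 1 then b + δ else b)
      else if (i : ℕ) + 1 = (j : ℕ) then c
      else if (j : ℕ) + 1 = (i : ℕ) then a
      else 0)
    (μ : ℂ) (hμ : μ ∈ spectrum ℂ A) :
    ∃ θ : ℂ, μ = b + 2 * sqa * sqc * Complex.cos θ ∧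
      (Complex.sin θ ≠ 0 →
        a * c * Complex.sin (((n : ℂ) + 1) * θ)
          - sqa * sqc * (γ + δ) * Complex.sin ((n : ℂ) * θ)
          + γ * δ * Complex.sin (((n : ℂ) - 1) * θ) = 0) ∧
      (Complex.sin θ = 0 →
        a * c * ((n : ℂ) + 1) - Complex.cos θ * (sqa * sqc) * (γ + δ) * (n : ℂ)
          + γ * δ * ((n : ℂ) - 1) = 0) := by
  subst hsqa hsqc
  have hsqa0 : sqa ≠ 0 := by rintro rfl; simp at hac
  have hsqc0 : sqc ≠ 0 := by rintro rfl; simp at hac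
  obtain rfl : A = tridiagonalWithCorners n (sqa ^ 2) b (sqc ^ 2) γ δ := Matrix.ext hA
  obtain ⟨v, hv0, hv⟩ := Matrix.exists_mulVec_eq_smul_of_mem_spectrum hμ
  obtain ⟨θ, hθ⟩ := Complex.cos_surjective ((μ - b) / (2 * sqa * sqc))
  have hμθ : μ - b = 2 * sqa * sqc * cos θ := by rw [hθ]; field_simp
  obtain ⟨hfirst, hmid, hlast⟩ := tridiagonalWithCorners_eigenvector_rows hn hv
  simp only [hμθ] at hfirst hmid hlast
  have hV : ∃ j < n, Fin.extendByZero v j ≠ 0 := by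
    obtain ⟨i, hi⟩ := Function.ne_iff.mp hv0
    exact ⟨i, i.2, by simpa using hi⟩
  have hchar := char_eq_zero_of_boundary_recurrence hsqa0 hsqc0 hn hfirst hmid hlast hV
  refine ⟨θ, by linear_combination hμθ, fun _ => ?_, fun hsin => ?_⟩
  · have h := sin_three_term_eq_zero_of_U_eval_cos n hchar
    push_cast at h
    linear_combination h
  · have hcos : cos θ ^ 2 = 1 := by linear_combination sin_sq_add_cos_sq θ - sin θ * hsin
    have h := three_term_eq_zero_of_U_eval_of_sq_eq_one hcos n hchar
    push_cast at h
    linear_combination h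
end

section
/- The eigenvalues of the k×k symmetric tridiagonal matrix B with diagonal (2, 2, ..., 2, 1), and −1 on the sub- and super-diagonals, are λ_j = 2 + 2cos(2jπ/(2k+1)) for j = 1, ..., k; in particular all eigenvalues of B are strictly less than 4. -/
/-!
If `sin ((k + 1) φ) = sin (k φ)` and `sin φ ≠ 0`, then `l ↦ sin ((l + 1) φ)` is an eigenvector of
the matrix with eigenvalue `2 - 2 cos φ`: this is the identity
`sin (a - b) + sin (a + b) = 2 cos b sin a` row by row, where the first row sees the value
`sin 0 = 0` and the boundary condition absorbs the modified last diagonal entry. The angles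
`φ = π - 2jπ/(2k+1)`, `1 ≤ j ≤ k`, satisfy it, since `(2k+1) φ` is an odd multiple of `π`.
This yields `k` distinct eigenvalues `2 + 2 cos (2jπ/(2k+1))`, so they exhaust the spectrum.
-/

open Real Matrix Finset

theorem Real.sin_sub_add_sin_add (a b : ℝ) : sin (a - b) + sin (a + b) = 2 * cos b * sin a := by
  rw [sin_sub, sin_add]; ring

theorem Real.sin_eq_sin_of_add_eq_odd_mul_pi {a b : ℝ} (m : ℕ) (h : a + b = (2 * m + 1) * π) :
    sin a = sin b := by
  rw [show a = π - b + m * (2 * π) by linarith, sin_add_nat_mul_two_pi, sin_pi_sub]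

theorem Fin.sum_univ_ite_val_eq {M : Type*} [AddCommMonoid M] (k m : ℕ) (a : M) :
    ∑ l : Fin k, (if (l : ℕ) = m then a else 0) = if m < k then a else 0 := by
  rw [Fin.sum_univ_eq_sum_range (fun l => if l = m then a else 0), sum_ite_eq']
  simp only [mem_range]

theorem Module.End.spectrum_eq_range_of_hasEigenvector {K V ι : Type*} [Field K]
    [AddCommGroup V] [Module K V] [FiniteDimensional K V] [Fintype ι] {f : Module.End K V}
    {μ : ι → K} {v : ι → V} (hμ : Function.Injective μ) (hv : ∀ i, f.HasEigenvector (μ i) (v i))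
    (hcard : Fintype.card ι = Module.finrank K V) :
    spectrum K f = Set.range μ := by
  have hspan : Submodule.span K (Set.range v) = ⊤ :=
    (f.eigenvectors_linearIndependent' μ hμ v hv).span_eq_top_of_card_eq_finrank' hcard
  have htop : (⨆ a ∈ Set.range μ, f.eigenspace a) = ⊤ := by
    rw [eq_top_iff, ← hspan, Submodule.span_le]
    rintro - ⟨i, rfl⟩
    exact Submodule.mem_iSup_of_mem (μ i) (Submodule.mem_iSup_of_mem ⟨i, rfl⟩ (hv i).1)
  ext a
  rw [← Module.End.hasEigenvalue_iff_mem_spectrum]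
  refine ⟨fun ha => ?_, ?_⟩
  · by_contra hnot
    have hdisj := f.eigenspaces_iSupIndep.disjoint_biSup hnot
    rw [htop, disjoint_top] at hdisj
    exact ha hdisj
  · rintro ⟨i, rfl⟩
    exact Module.End.hasEigenvalue_of_hasEigenvector (hv i)

def branchMatrix (k : ℕ) : Matrix (Fin k) (Fin k) ℝ :=
  Matrix.of fun i j =>
    if (i : ℕ) = (j : ℕ) then (if (i : ℕ) = k - 1 then 1 else 2)
    else if (i : ℕ) + 1 = (j : ℕ) ∨ (j : ℕ) + 1 = (i : ℕ) then -1
    else 0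

theorem branchMatrix_apply_mul (k : ℕ) (x : ℕ → ℝ) (i l : Fin k) :
    branchMatrix k i l * x (l + 1) =
      (if (l : ℕ) = i then (if (i : ℕ) + 1 = k then 1 else 2) * x (i + 1) else 0)
      - (if (l : ℕ) + 1 = i then x i else 0) - (if (l : ℕ) = i + 1 then x (i + 2) else 0) := by
  rcases i with ⟨i, hi⟩
  rcases l with ⟨l, hl⟩
  simp only [branchMatrix, of_apply]
  split_ifs <;> first | omega | (subst_vars; ring)

theorem branchMatrix_mulVec_apply (k : ℕ) (x : ℕ → ℝ) (h₀ : x 0 = 0) (hend : x (k + 1) = x k)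
    (i : Fin k) :
    (branchMatrix k *ᵥ fun l => x (l + 1)) i = 2 * x (i + 1) - x i - x (i + 2) := by
  have hleft : ∑ l : Fin k, (if (l : ℕ) + 1 = i then x i else 0) = x i := by
    obtain ⟨_ | i', hi⟩ := i
    · simp [h₀]
    · simp [Fin.sum_univ_ite_val_eq, show i' < k by omega]
  simp only [mulVec, dotProduct, branchMatrix_apply_mul, sum_sub_distrib, Fin.sum_univ_ite_val_eq,
    hleft, i.isLt, if_true]
  rcases (show (i : ℕ) + 1 < k ∨ (i : ℕ) + 1 = k by omega) with hlt | hlast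
  · simp only [hlt, hlt.ne, if_true, if_false]
  · have hflat : x (i + 2) = x (i + 1) := by rw [show (i : ℕ) + 2 = k + 1 by omega, hend, hlast]
    simp only [hlast, lt_irrefl, if_true, if_false, hflat]
    ring

theorem branchMatrix_hasEigenvector_of_sin {k : ℕ} (hk : 0 < k) {φ : ℝ} (hφ : sin φ ≠ 0)
    (hend : sin ((k + 1) * φ) = sin (k * φ)) :
    Module.End.HasEigenvector (toLin' (branchMatrix k)) (2 - 2 * cos φ)
      fun l : Fin k => sin ((l + 1) * φ) := by
  refine ⟨?_, fun h => hφ (by simpa using congrFun h ⟨0, hk⟩)⟩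
  rw [Module.End.mem_eigenspace_iff]
  funext i
  have hrow :=
    branchMatrix_mulVec_apply k (fun n => sin (n * φ)) (by simp) (by exact_mod_cast hend) i
  have hrec := sin_sub_add_sin_add ((i + 1) * φ) φ
  push_cast at hrow
  simp only [toLin'_apply, hrow, Pi.smul_apply, smul_eq_mul]
  rw [show ((i : ℝ) + 1) * φ - φ = i * φ by ring,
    show ((i : ℝ) + 1) * φ + φ = (i + 2) * φ by ring] at hrec
  linear_combination -hrec

noncomputable def branchAngle (k j : ℕ) : ℝ := 2 * j * π / (2 * k + 1)

theorem branchAngle_mem_Ioo {k j : ℕ} (hj : j ∈ Set.Icc 1 k) : branchAngle k j ∈ Set.Ioo 0 π := by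
  obtain ⟨hj₁, hjk⟩ := hj
  have hj₁' : (1 : ℝ) ≤ j := by exact_mod_cast hj₁
  have hjk' : (j : ℝ) ≤ k := by exact_mod_cast hjk
  unfold branchAngle
  constructor
  · positivity
  · rw [div_lt_iff₀ (by positivity)]
    nlinarith [pi_pos]

theorem branchMatrix_hasEigenvector {k j : ℕ} (hj : j ∈ Set.Icc 1 k) :
    Module.End.HasEigenvector (toLin' (branchMatrix k)) (2 + 2 * cos (branchAngle k j))
      fun l : Fin k => sin ((l + 1) * (π - branchAngle k j)) := by
  obtain ⟨hpos, hlt⟩ := branchAngle_mem_Ioo hj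
  have hend : (k + 1) * (π - branchAngle k j) + k * (π - branchAngle k j)
      = (2 * ((k - j : ℕ) : ℝ) + 1) * π := by
    rw [Nat.cast_sub hj.2, branchAngle]
    field_simp
    ring
  simpa [cos_pi_sub] using branchMatrix_hasEigenvector_of_sin (hj.1.trans hj.2)
    (by rw [sin_pi_sub]; exact (sin_pos_of_pos_of_lt_pi hpos hlt).ne')
    (sin_eq_sin_of_add_eq_odd_mul_pi _ hend)

theorem injOn_branchEigenvalue (k : ℕ) :
    Set.InjOn (fun j => 2 + 2 * cos (branchAngle k j)) (Set.Icc 1 k) := by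
  intro a ha b hb hab
  have hangle := injOn_cos (Set.Ioo_subset_Icc_self (branchAngle_mem_Ioo ha))
    (Set.Ioo_subset_Icc_self (branchAngle_mem_Ioo hb)) (by simpa using hab)
  simp only [branchAngle] at hangle
  field_simp at hangle
  exact_mod_cast hangle

theorem branch_matrix_eigs_general (k : ℕ) (B : Matrix (Fin k) (Fin k) ℝ)
    (hB : ∀ i j : Fin k, B i j =
      if (i : ℕ) = (j : ℕ) then (if (i : ℕ) = k - 1 then 1 else 2)
      else if (i : ℕ) + 1 = (j : ℕ) ∨ (j : ℕ) + 1 = (i : ℕ) then -1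
      else 0) :
    (∀ μ : ℝ, μ ∈ spectrum ℝ B ↔
      ∃ j : ℕ, 1 ≤ j ∧ j ≤ k ∧
        μ = 2 + 2 * Real.cos (2 * (j : ℝ) * Real.pi / (2 * (k : ℝ) + 1))) ∧
    (∀ μ ∈ spectrum ℝ B, μ < 4) := by
  obtain rfl : B = branchMatrix k := Matrix.ext hB
  have hspec : spectrum ℝ (branchMatrix k)
      = (fun j => 2 + 2 * cos (branchAngle k j)) '' Set.Icc 1 k := by
    rw [← spectrum_toLin', Set.image_eq_range]
    exact Module.End.spectrum_eq_range_of_hasEigenvector (injOn_branchEigenvalue k).injective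
      (fun j => branchMatrix_hasEigenvector j.2) (by simp)
  have hiff : ∀ μ : ℝ, μ ∈ spectrum ℝ (branchMatrix k) ↔
      ∃ j : ℕ, 1 ≤ j ∧ j ≤ k ∧ μ = 2 + 2 * cos (branchAngle k j) := by
    simp [hspec, eq_comm, and_assoc]
  refine ⟨hiff, fun μ hμ => ?_⟩
  obtain ⟨j, hj₁, hjk, rfl⟩ := (hiff μ).1 hμ
  obtain ⟨hpos, hlt⟩ := branchAngle_mem_Ioo ⟨hj₁, hjk⟩
  have hcos := cos_lt_cos_of_nonneg_of_le_pi le_rfl hlt.le hpos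
  rw [cos_zero] at hcos
  linarith

/-- the eigenvalues of the `k×k` tridiagonal matrix with diagonal
`(2, …, 2, 1)` and `−1` off-diagonals are `2 + 2cos(2jπ/(2k+1))`, `j = 1, …, k`;
in particular they are all strictly less than `4`. -/
theorem branch_matrix_eigs (k : ℕ) (hk : 1 ≤ k) (B : Matrix (Fin k) (Fin k) ℝ)
    (hB : ∀ i j : Fin k, B i j =
      if (i : ℕ) = (j : ℕ) then (if (i : ℕ) = k - 1 then 1 else 2)
      else if (i : ℕ) + 1 = (j : ℕ) ∨ (j : ℕ) + 1 = (i : ℕ) then -1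
      else 0) :
    (∀ μ : ℝ, μ ∈ spectrum ℝ B ↔
      ∃ j : ℕ, 1 ≤ j ∧ j ≤ k ∧
        μ = 2 + 2 * Real.cos (2 * (j : ℝ) * Real.pi / (2 * (k : ℝ) + 1))) ∧
    (∀ μ ∈ spectrum ℝ B, μ < 4) :=
  branch_matrix_eigs_general k B hB
end

section
/- Define the sequence (α_k)_{k≥0} by α_0 = −1 and α_k = 1/(λ − 2 − α_{k−1}) for k ≥ 1, where λ ≥ 4 is a real parameter. Setting x = (λ − 2 − √(λ(λ−4)))/2 and y = (λ − 2 + √(λ(λ−4)))/2, one has: for λ > 4, α_k = (x^k y (x+1) − x y^k (y+1)) / (x^k (x+1) − y^k (y+1)) and α_k ∈ (0, (2k−1)/(2k+1)); for λ = 4, α_k = (2k−1)/(2k+1) < 1. -/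
/-!
The map `a ↦ 1 / (c - a)` acts on fractions `N / D` as the linear map `(N, D) ↦ (D, c D - N)`.
With `c = λ - 2 = x + y` and `x y = 1`, the pair
`(x^k y (x+1) - x y^k (y+1), x^k (x+1) - y^k (y+1))` is an orbit of this map starting at a
representative of `-1`, which gives the closed form. For `λ = 4` the orbit of `-1` is
`(2k-1)/(2k+1)`; for `λ > 4` the bounds follow by comparison with it, since `1 / (λ - 2 - a)` is
increasing in `a` and decreasing in `λ`.
-/

lemma eq_div_of_eq_one_div_sub {α N D : ℕ → ℝ} {c : ℝ} (h0 : α 0 = N 0 / D 0)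
    (hrec : ∀ k, α (k + 1) = 1 / (c - α k)) (hN : ∀ k, N (k + 1) = D k)
    (hD : ∀ k, D (k + 1) = c * D k - N k) (hD0 : ∀ k, D k ≠ 0) (k : ℕ) :
    α k = N k / D k := by
  induction k with
  | zero => exact h0
  | succ k ih =>
    rw [hrec, ih, hN, hD, ← one_div_div (c * D k - N k) (D k), sub_div,
      mul_div_cancel_right₀ c (hD0 k)]

lemma pow_mul_add_one_sub_ne_zero {x y : ℝ} (hx : 0 ≤ x) (hxy : x < y) (k : ℕ) :
    x ^ k * (x + 1) - y ^ k * (y + 1) ≠ 0 :=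
  sub_ne_zero.mpr (mul_lt_mul' (pow_le_pow_left₀ hx hxy.le k) (by linarith)
    (by linarith) (pow_pos (hx.trans_lt hxy) k)).ne

lemma odd_ratio_lt_one (k : ℕ) : (2 * (k : ℝ) - 1) / (2 * k + 1) < 1 :=
  (div_lt_one (by positivity)).mpr (by linarith)

lemma one_div_two_sub_odd_ratio (k : ℕ) :
    1 / (2 - (2 * (k : ℝ) - 1) / (2 * k + 1)) =
      (2 * ((k + 1 : ℕ) : ℝ) - 1) / (2 * (k + 1 : ℕ) + 1) := by
  have : (2 * (k : ℝ) + 1) ≠ 0 := by positivity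
  rw [sub_div' this, one_div_div]
  push_cast
  congr 1 <;> ring

section

variable {α : ℕ → ℝ}

lemma alpha_eq_odd_ratio_of_four (h0 : α 0 = -1)
    (hrec : ∀ k, α (k + 1) = 1 / (4 - 2 - α k)) (k : ℕ) :
    α k = (2 * (k : ℝ) - 1) / (2 * k + 1) := by
  induction k with
  | zero => simp [h0]
  | succ k ih => rw [hrec, ih, show (4 : ℝ) - 2 = 2 by norm_num, one_div_two_sub_odd_ratio]

lemma alpha_pos_and_lt_odd_ratio {lam : ℝ} (hlam : 4 < lam) (h0 : α 0 = -1)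
    (hrec : ∀ k, α (k + 1) = 1 / (lam - 2 - α k)) (k : ℕ) (hk : 1 ≤ k) :
    0 < α k ∧ α k < (2 * (k : ℝ) - 1) / (2 * k + 1) := by
  induction k, hk using Nat.le_induction with
  | base =>
    rw [hrec, h0, show (2 * ((1 : ℕ) : ℝ) - 1) / (2 * (1 : ℕ) + 1) = 1 / 3 by norm_num]
    exact ⟨one_div_pos.mpr (by linarith), one_div_lt_one_div_of_lt (by norm_num) (by linarith)⟩
  | succ k _ ih =>
    obtain ⟨hpos, hlt⟩ := ih
    have hgap : 0 < 2 - (2 * (k : ℝ) - 1) / (2 * k + 1) := by linarith [odd_ratio_lt_one k]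
    rw [hrec, ← one_div_two_sub_odd_ratio]
    exact ⟨one_div_pos.mpr (by linarith), one_div_lt_one_div_of_lt hgap (by linarith)⟩

end

theorem alpha_closed_form_general (lam : ℝ) (α : ℕ → ℝ)
    (h0 : α 0 = -1) (hrec : ∀ k : ℕ, α (k + 1) = 1 / (lam - 2 - α k))
    (x y : ℝ) (hx : x = (lam - 2 - Real.sqrt (lam * (lam - 4))) / 2)
    (hy : y = (lam - 2 + Real.sqrt (lam * (lam - 4))) / 2) :
    (4 < lam → ∀ k : ℕ, 1 ≤ k →
      α k = (x ^ k * y * (x + 1) - x * y ^ k * (y + 1))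
              / (x ^ k * (x + 1) - y ^ k * (y + 1)) ∧
        0 < α k ∧ α k < (2 * (k : ℝ) - 1) / (2 * (k : ℝ) + 1)) ∧
    (lam = 4 → ∀ k : ℕ, 1 ≤ k →
      α k = (2 * (k : ℝ) - 1) / (2 * (k : ℝ) + 1) ∧
        (2 * (k : ℝ) - 1) / (2 * (k : ℝ) + 1) < 1) := by
  refine ⟨fun hlam k hk => ⟨?_, alpha_pos_and_lt_odd_ratio hlam h0 hrec k hk⟩,
    fun hlam k _ =>
      ⟨alpha_eq_odd_ratio_of_four h0 (by subst hlam; exact hrec) k, odd_ratio_lt_one k⟩⟩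
  have hs := Real.sq_sqrt (show 0 ≤ lam * (lam - 4) by nlinarith)
  have hsqrt_pos : 0 < Real.sqrt (lam * (lam - 4)) := Real.sqrt_pos.mpr (by nlinarith)
  have hprod : x * y = 1 := by rw [hx, hy]; linear_combination -hs / 4
  have hsum : x + y = lam - 2 := by rw [hx, hy]; ring
  have hxy : x < y := by rw [hx, hy]; linarith
  have hx0 : 0 ≤ x := by nlinarith
  refine eq_div_of_eq_one_div_sub (c := lam - 2)
    (N := fun k => x ^ k * y * (x + 1) - x * y ^ k * (y + 1)) ?_ hrec (fun k => ?_) (fun k => ?_)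
    (pow_mul_add_one_sub_ne_zero hx0 hxy) k
  · rw [h0, eq_div_iff (by simpa using pow_mul_add_one_sub_ne_zero hx0 hxy 0)]
    ring
  · linear_combination (x ^ k * (x + 1) - y ^ k * (y + 1)) * hprod
  · rw [← hsum]
    ring

/-- closed form and bounds for the continued-fraction sequence
`α_0 = −1`, `α_k = 1/(λ − 2 − α_{k−1})`, for `λ ≥ 4`, where
`x = (λ − 2 − √(λ(λ−4)))/2` and `y = (λ − 2 + √(λ(λ−4)))/2`. -/
theorem alpha_closed_form (lam : ℝ) (hlam : 4 ≤ lam) (α : ℕ → ℝ)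
    (h0 : α 0 = -1) (hrec : ∀ k : ℕ, α (k + 1) = 1 / (lam - 2 - α k))
    (x y : ℝ) (hx : x = (lam - 2 - Real.sqrt (lam * (lam - 4))) / 2)
    (hy : y = (lam - 2 + Real.sqrt (lam * (lam - 4))) / 2) :
    (4 < lam → ∀ k : ℕ, 1 ≤ k →
      α k = (x ^ k * y * (x + 1) - x * y ^ k * (y + 1))
              / (x ^ k * (x + 1) - y ^ k * (y + 1)) ∧
        0 < α k ∧ α k < (2 * (k : ℝ) - 1) / (2 * (k : ℝ) + 1)) ∧
    (lam = 4 → ∀ k : ℕ, 1 ≤ k →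
      α k = (2 * (k : ℝ) - 1) / (2 * (k : ℝ) + 1) ∧
        (2 * (k : ℝ) - 1) / (2 * (k : ℝ) + 1) < 1) :=
  alpha_closed_form_general lam α h0 hrec x y hx hy
end

section
/- For the uniform tree H_{0,k} with trunk length m = 0 (consecutive T-junctions adjacent) and t T-junctions, the number of Laplacian eigenvalues at least 4 satisfies n_{4+}(H_{0,k}) ≤ ⌊(t+1)/2⌋ for all branch lengths k ≥ 1. -/
/-- The uniform tree `H_{m,k}` with `t` T-junctions: `t` degree-3 vertices aligned on a
spine, consecutive junctions separated by `m` degree-2 vertices; each junction carries a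
pendant branch which is a path of `k` vertices, and the two end junctions carry one
additional such branch (so each junction has degree 3).  Spine vertex `i` (for
`0 ≤ i < t + (t-1)m`) is a junction iff `i` is a multiple of `m+1`; branch `b` (for
`0 ≤ b < t+2`) is attached to spine vertex `0` for `b = 0`, to junction `b-1` for
`1 ≤ b ≤ t`, and to the last spine vertex for `b = t+1`. -/
def uniformTree (m k t : ℕ) :
    SimpleGraph (Fin (t + (t - 1) * m) ⊕ Fin (t + 2) × Fin k) :=
  SimpleGraph.fromRel fun x y =>
    match x, y with
    | Sum.inl i, Sum.inl j => (j : ℕ) = (i : ℕ) + 1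
    | Sum.inr (b, p), Sum.inr (b', p') => b = b' ∧ (p' : ℕ) = (p : ℕ) + 1
    | Sum.inl i, Sum.inr (b, p) => (p : ℕ) = 0 ∧
        (((b : ℕ) = 0 ∧ (i : ℕ) = 0) ∨
         (1 ≤ (b : ℕ) ∧ (b : ℕ) ≤ t ∧ (i : ℕ) = ((b : ℕ) - 1) * (m + 1)) ∨
         ((b : ℕ) = t + 1 ∧ (i : ℕ) = (t - 1) * (m + 1)))
    | Sum.inr _, Sum.inl _ => False

/-!
By a Courant–Fischer count it suffices to find a subspace of codimension `⌊(t+1)/2⌋` on which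
the Laplacian form `q` satisfies `q x < 4‖x‖²`. Take the vectors that agree on each pair of
adjacent spine vertices `2j, 2j + 1` and, for odd `t`, vanish at the last spine vertex. There
the spine contributes at most `2‖x_spine‖² - 2 x₀² - 2 x_{t-1}²` beyond `4‖x_spine‖²`, while a
pendant path of `k` vertices hanging from a vertex of value `w` contributes at most
`4k/(2k+1) · w² < 2 w²` beyond four times its own squared norm. Every spine vertex carries one
branch and the two end vertices one more, so the total is negative.
-/

open Finset Matrix

theorem Matrix.IsHermitian.card_eigenvalues_ge_add_finrank_le {V : Type*} [Fintype V]
    [DecidableEq V] {A : Matrix V V ℝ} (hA : A.IsHermitian) {c : ℝ} (W : Submodule ℝ (V → ℝ))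
    (hW : ∀ x ∈ W, x ≠ 0 → x ⬝ᵥ A *ᵥ x < c * (x ⬝ᵥ x)) :
    #{i | c ≤ hA.eigenvalues i} + Module.finrank ℝ W ≤ Fintype.card V := by
  set S : Finset V := {i | c ≤ hA.eigenvalues i}
  let v : S → V → ℝ := fun i => hA.eigenvectorBasis i
  have hv : ∀ i j, v i ⬝ᵥ v j = if i = j then 1 else 0 := fun i j => by
    have := orthonormal_iff_ite.mp hA.eigenvectorBasis.orthonormal i.1 j.1
    rw [EuclideanSpace.inner_eq_star_dotProduct, star_trivial, dotProduct_comm] at this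
    rw [this]
    exact if_congr Subtype.ext_iff.symm rfl rfl
  have hind : LinearIndependent ℝ v :=
    (hA.eigenvectorBasis.orthonormal.linearIndependent.comp _ Subtype.val_injective).map'
      (WithLp.linearEquiv 2 ℝ (V → ℝ)).toLinearMap (WithLp.linearEquiv 2 ℝ (V → ℝ)).ker
  set E := Submodule.span ℝ (Set.range v)
  have hE : ∀ x ∈ E, c * (x ⬝ᵥ x) ≤ x ⬝ᵥ A *ᵥ x := by
    intro x hx
    obtain ⟨f, rfl⟩ := Submodule.mem_span_range_iff_exists_fun ℝ |>.mp hx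
    have hAv : ∀ i, A *ᵥ v i = hA.eigenvalues i • v i := fun i => hA.mulVec_eigenvectorBasis i
    simp only [mulVec_sum, mulVec_smul, hAv, smul_smul, sum_dotProduct, dotProduct_sum,
      smul_dotProduct, dotProduct_smul, hv, smul_eq_mul, mul_ite, mul_one, mul_zero,
      sum_ite_eq', mem_univ, if_true, mul_sum]
    exact sum_le_sum fun i _ => by
      nlinarith [(mem_filter.mp i.2).2, mul_self_nonneg (f i)]
  have hdisj : Disjoint E W := Submodule.disjoint_def.mpr fun x hxE hxW => by
    by_contra hx
    exact (hE x hxE).not_gt (hW x hxW hx)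
  have := Submodule.finrank_add_finrank_le_of_disjoint hdisj
  rwa [finrank_span_eq_card hind, Fintype.card_coe, Module.finrank_fintype_fun_eq_card] at this

theorem SimpleGraph.sum_ite_adj_eq_two_mul_of_eq_fromRel {V R : Type*} [Fintype V]
    [NonAssocSemiring R] (G : SimpleGraph V) [DecidableRel G.Adj] (r : V → V → Prop)
    [DecidableRel r] (hG : G = SimpleGraph.fromRel r) (hr : ∀ u v, r u v → ¬ r v u)
    (f : V → V → R) (hf : ∀ u v, f u v = f v u) :
    ∑ u, ∑ v, (if G.Adj u v then f u v else 0) = 2 * ∑ u, ∑ v, if r u v then f u v else 0 := by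
  subst hG
  have hsplit : ∀ u v, (if (SimpleGraph.fromRel r).Adj u v then f u v else 0)
      = (if r u v then f u v else 0) + (if r v u then f v u else 0) := fun u v => by
    by_cases huv : r u v
    · have hne : u ≠ v := by rintro rfl; exact hr u u huv huv
      simp [huv, hr u v huv, hne]
    · by_cases hvu : r v u
      · have hne : u ≠ v := by rintro rfl; exact huv hvu
        simp [huv, hvu, hne, hf u v]
      · simp [huv, hvu]
  simp only [hsplit, sum_add_distrib]
  rw [sum_comm (f := fun u v => if r v u then f v u else 0), two_mul]

theorem Fin.sum_ite_val_eq_s13 {M : Type*} [AddCommMonoid M] (n c : ℕ) (h : ℕ → M) :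
    ∑ i : Fin n, (if (i : ℕ) = c then h i else 0) = if c < n then h c else 0 := by
  rw [Fin.sum_univ_eq_sum_range (fun i => if i = c then h i else 0), sum_ite_eq']
  simp only [mem_range]

theorem Fin.sum_sum_ite_val_eq_succ {M : Type*} [AddCommMonoid M] (n : ℕ) (h : ℕ → ℕ → M) :
    ∑ i : Fin n, ∑ j : Fin n, (if (j : ℕ) = i + 1 then h i j else 0)
      = ∑ a ∈ range (n - 1), h a (a + 1) := by
  calc ∑ i : Fin n, ∑ j : Fin n, (if (j : ℕ) = i + 1 then h i j else 0)
      = ∑ i : Fin n, if (i : ℕ) + 1 < n then h i (i + 1) else 0 :=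
        sum_congr rfl fun i _ => Fin.sum_ite_val_eq_s13 n _ (h i)
    _ = ∑ a ∈ range n, if a + 1 < n then h a (a + 1) else 0 :=
        Fin.sum_univ_eq_sum_range (fun a => if a + 1 < n then h a (a + 1) else 0) n
    _ = ∑ a ∈ range (n - 1), h a (a + 1) := by
        rw [← sum_filter]
        congr 1
        ext a
        simp only [mem_filter, mem_range]
        omega

namespace UniformTree

def pathEnergy (n : ℕ) (g : ℕ → ℝ) : ℝ := ∑ a ∈ range n, (g a - g (a + 1)) ^ 2

lemma pathEnergy_succ (n : ℕ) (g : ℕ → ℝ) :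
    pathEnergy (n + 1) g = pathEnergy n g + (g n - g (n + 1)) ^ 2 :=
  sum_range_succ _ _

/-- The Laplacian form minus `4‖·‖²` on a pendant path with values `g 0, …, g (k - 1)`,
hanging from a vertex of value `w` (whose own square is not counted). -/
def branchForm (k : ℕ) (w : ℝ) (g : ℕ → ℝ) : ℝ :=
  (w - g 0) ^ 2 + pathEnergy (k - 1) g - 4 * ∑ p ∈ range k, g p ^ 2

lemma branchForm_one (w : ℝ) (g : ℕ → ℝ) : branchForm 1 w g = (w - g 0) ^ 2 - 4 * g 0 ^ 2 := by
  simp [branchForm, pathEnergy]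

lemma branchForm_succ {k : ℕ} (hk : 1 ≤ k) (w : ℝ) (g : ℕ → ℝ) :
    branchForm (k + 1) w g = (w - g 0) ^ 2 - 4 * g 0 ^ 2 + branchForm k (g 0) (g ∘ Nat.succ) := by
  obtain ⟨k, rfl⟩ := Nat.exists_eq_add_of_le' hk
  simp only [branchForm, pathEnergy, Nat.add_sub_cancel, sum_range_succ' _ (k + 1),
    sum_range_succ' (fun a => (g a - g (a + 1)) ^ 2), Function.comp_apply]
  ring

/-- The constant comes from completing the square:
`4(k+1)/(2k+3) w² - ((w - g)² - 4g² + 4k/(2k+1) g²) = ((2k+1)w + (2k+3)g)² / ((2k+1)(2k+3))`. -/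
lemma branchForm_le {k : ℕ} (hk : 1 ≤ k) (w : ℝ) (g : ℕ → ℝ) :
    branchForm k w g ≤ 4 * k / (2 * k + 1) * w ^ 2 := by
  induction k, hk using Nat.le_induction generalizing w g with
  | base =>
    rw [branchForm_one]
    nlinarith [sq_nonneg (w + 3 * g 0)]
  | succ k hk ih =>
    have hsq : 4 * (k + 1 : ℕ) / (2 * (k + 1 : ℕ) + 1) * w ^ 2
        - ((w - g 0) ^ 2 - 4 * g 0 ^ 2 + 4 * k / (2 * k + 1) * g 0 ^ 2)
        = ((2 * k + 1) * w + (2 * k + 3) * g 0) ^ 2 / ((2 * k + 1) * (2 * k + 3)) := by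
      push_cast
      field_simp
      ring
    calc branchForm (k + 1) w g
        = (w - g 0) ^ 2 - 4 * g 0 ^ 2 + branchForm k (g 0) (g ∘ Nat.succ) := branchForm_succ hk w g
      _ ≤ (w - g 0) ^ 2 - 4 * g 0 ^ 2 + 4 * k / (2 * k + 1) * g 0 ^ 2 := by gcongr; exact ih _ _
      _ ≤ 4 * (k + 1 : ℕ) / (2 * (k + 1 : ℕ) + 1) * w ^ 2 := by
        rw [← sub_nonneg, hsq]
        positivity

lemma four_mul_div_two_mul_add_one_lt_two (k : ℕ) : 4 * (k : ℝ) / (2 * k + 1) < 2 := by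
  rw [div_lt_iff₀ (by positivity)]
  linarith

lemma branchForm_zero_neg {k : ℕ} (g : ℕ → ℝ) (hg : 0 < ∑ p ∈ range k, g p ^ 2) :
    branchForm k 0 g < 0 := by
  induction k generalizing g with
  | zero => simp at hg
  | succ k ih =>
    rcases Nat.eq_zero_or_pos k with rfl | hk
    · rw [branchForm_one]
      simp only [zero_add, range_one, sum_singleton] at hg
      linarith
    rw [branchForm_succ hk]
    by_cases hg0 : g 0 = 0
    · rw [sum_range_succ'] at hg
      simpa [hg0] using ih (g ∘ Nat.succ) (by simpa [hg0] using hg)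
    · have hpos : 0 < g 0 ^ 2 := by positivity
      nlinarith [branchForm_le hk (g 0) (g ∘ Nat.succ), four_mul_div_two_mul_add_one_lt_two k]

/-- Pairs spine vertices `2j, 2j + 1`; for odd `t` the unpaired last vertex `2j = t - 1` is
pinned to `0`. -/
def pairConstraints (t : ℕ) : (ℕ → ℝ) →ₗ[ℝ] Fin ((t + 1) / 2) → ℝ where
  toFun Z j := if 2 * (j : ℕ) + 1 < t then Z (2 * j) - Z (2 * j + 1) else Z (2 * j)
  map_add' _ _ := by ext; dsimp only [Pi.add_apply]; split_ifs <;> ring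
  map_smul' _ _ := by
    ext; dsimp only [Pi.smul_apply, smul_eq_mul, RingHom.id_apply]; split_ifs <;> ring

/-- Edges inside a pair vanish; every other edge joins two pairs and is at most
`2 (Z a ^ 2 + Z (a + 1) ^ 2)`, and each interior vertex lies on at most one such edge. -/
lemma pathEnergy_add_ends_le {t : ℕ} (ht : 1 ≤ t) {Z : ℕ → ℝ} (hZ : pairConstraints t Z = 0) :
    pathEnergy (t - 1) Z + 2 * Z 0 ^ 2 + 2 * Z (t - 1) ^ 2 ≤ 2 * ∑ a ∈ range t, Z a ^ 2 := by
  have hpair : ∀ j, 2 * j + 1 < t → Z (2 * j) = Z (2 * j + 1) := fun j hj => by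
    simpa [pairConstraints, hj, sub_eq_zero] using congrFun hZ ⟨j, by omega⟩
  have heven : ∀ j, 2 * j + 2 ≤ t → pathEnergy (2 * j + 1) Z + 2 * Z 0 ^ 2
      + 2 * Z (2 * j + 1) ^ 2 ≤ 2 * ∑ a ∈ range (2 * j + 2), Z a ^ 2 := by
    intro j hj
    induction j with
    | zero =>
      simp [pathEnergy, sum_range_succ, ← hpair 0 (by omega), mul_add]
    | succ j ih =>
      have hp := hpair (j + 1) (by omega)
      rw [show 2 * (j + 1) = 2 * j + 2 by ring] at hp ⊢
      rw [pathEnergy_succ, pathEnergy_succ, sum_range_succ, sum_range_succ, ← hp]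
      nlinarith [ih (by omega), sq_nonneg (Z (2 * j + 1) + Z (2 * j + 2))]
  obtain ⟨j, rfl | rfl⟩ := Nat.even_or_odd' t
  · obtain ⟨i, rfl⟩ : ∃ i, j = i + 1 := ⟨j - 1, by omega⟩
    rw [show 2 * (i + 1) = 2 * i + 2 by ring]
    exact heven i (by omega)
  · have hlast : Z (2 * j) = 0 := by
      simpa [pairConstraints] using congrFun hZ ⟨j, by omega⟩
    rcases j with _ | i
    · simp_all [pathEnergy]
    · rw [show 2 * (i + 1) = 2 * i + 2 by ring] at hlast ⊢
      rw [Nat.add_sub_cancel, pathEnergy_succ, sum_range_succ, hlast]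
      nlinarith [heven i (by omega), sq_nonneg (Z (2 * i + 1))]

/-- Branch `b` of `uniformTree 0 k t` hangs from spine vertex `junction t b`: the truncated
subtractions give `0` for `b = 0` and `t - 1` for `b = t + 1`. -/
def junction (t b : ℕ) : ℕ := min (b - 1) (t - 1)

lemma sum_range_junction (t : ℕ) (F : ℕ → ℝ) :
    ∑ b ∈ range (t + 2), F (junction t b) = ∑ a ∈ range t, F a + F 0 + F (t - 1) := by
  rw [sum_range_succ, sum_range_succ']
  have hmid : ∀ a ∈ range t, F (junction t (a + 1)) = F a := fun a ha => by
    rw [junction, show min (a + 1 - 1) (t - 1) = a by grind]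
  rw [sum_congr rfl hmid]
  simp [junction]

lemma pathEnergy_sub_add_sum_branchForm_neg {t k : ℕ} (ht : 1 ≤ t) (hk : 1 ≤ k) {Z : ℕ → ℝ}
    (hZ : pairConstraints t Z = 0) (Y : ℕ → ℕ → ℝ)
    (hpos : 0 < ∑ a ∈ range t, Z a ^ 2 + ∑ b ∈ range (t + 2), ∑ p ∈ range k, Y b p ^ 2) :
    pathEnergy (t - 1) Z - 4 * ∑ a ∈ range t, Z a ^ 2
      + ∑ b ∈ range (t + 2), branchForm k (Z (junction t b)) (Y b) < 0 := by
  have hS : 0 ≤ ∑ a ∈ range t, Z a ^ 2 := sum_nonneg fun a _ => sq_nonneg _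
  rcases hS.eq_or_lt with hS | hS
  · have hZ0 : ∀ a < t, Z a = 0 := fun a ha => by
      simpa using (sum_eq_zero_iff_of_nonneg fun a _ => sq_nonneg (Z a)).mp hS.symm a
        (mem_range.mpr ha)
    have hE : pathEnergy (t - 1) Z = 0 :=
      sum_eq_zero fun a ha => by rw [hZ0 a (by grind), hZ0 (a + 1) (by grind)]; ring
    obtain ⟨b, hb, hYb⟩ := exists_lt_of_sum_lt (s := range (t + 2))
      (f := fun _ => (0 : ℝ)) (by simpa [← hS] using hpos)
    have hJ : ∀ b, Z (junction t b) = 0 := fun b => hZ0 _ (by unfold junction; omega)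
    rw [hE, ← hS, mul_zero, sub_zero, zero_add]
    calc ∑ b ∈ range (t + 2), branchForm k (Z (junction t b)) (Y b)
        < ∑ b ∈ range (t + 2), (0 : ℝ) := by
          refine sum_lt_sum (fun b _ => ?_) ⟨b, hb, ?_⟩
          · simpa [hJ] using branchForm_le hk 0 (Y b)
          · exact hJ b ▸ branchForm_zero_neg (Y b) hYb
      _ = 0 := sum_const_zero
  · have hbr : ∑ b ∈ range (t + 2), branchForm k (Z (junction t b)) (Y b)
        ≤ 4 * k / (2 * k + 1) * (∑ a ∈ range t, Z a ^ 2 + Z 0 ^ 2 + Z (t - 1) ^ 2) := by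
      rw [← sum_range_junction t (fun a => Z a ^ 2), mul_sum]
      exact sum_le_sum fun b _ => branchForm_le hk _ _
    have hγ := four_mul_div_two_mul_add_one_lt_two k
    nlinarith [pathEnergy_add_ends_le ht hZ, mul_pos (sub_pos.mpr hγ)
      (add_pos_of_pos_of_nonneg (add_pos_of_pos_of_nonneg hS (sq_nonneg (Z 0)))
        (sq_nonneg (Z (t - 1))))]

section Coordinates

variable {t k : ℕ}

def spineValues (t k : ℕ) : (Fin (t + (t - 1) * 0) ⊕ Fin (t + 2) × Fin k → ℝ) →ₗ[ℝ] ℕ → ℝ where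
  toFun x a := if h : a < t then x (.inl ⟨a, h⟩) else 0
  map_add' _ _ := by ext; dsimp only [Pi.add_apply]; split_ifs <;> simp
  map_smul' _ _ := by
    ext; dsimp only [Pi.smul_apply, smul_eq_mul, RingHom.id_apply]; split_ifs <;> simp

def branchValues (x : Fin (t + (t - 1) * 0) ⊕ Fin (t + 2) × Fin k → ℝ) (b p : ℕ) : ℝ :=
  if h : b < t + 2 ∧ p < k then x (.inr (⟨b, h.1⟩, ⟨p, h.2⟩)) else 0

variable (x : Fin (t + (t - 1) * 0) ⊕ Fin (t + 2) × Fin k → ℝ)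

lemma spineValues_val (i : Fin (t + (t - 1) * 0)) : spineValues t k x i = x (.inl i) :=
  dif_pos i.2

lemma branchValues_val (b : Fin (t + 2)) (p : Fin k) : branchValues x b p = x (.inr (b, p)) :=
  dif_pos ⟨b.2, p.2⟩

lemma dotProduct_self_eq_spineValues_add_branchValues :
    x ⬝ᵥ x = ∑ a ∈ range t, spineValues t k x a ^ 2
      + ∑ b ∈ range (t + 2), ∑ p ∈ range k, branchValues x b p ^ 2 := by
  simp only [dotProduct, Fintype.sum_sum_type, Fintype.sum_prod_type, ← sq,
    ← spineValues_val, ← branchValues_val]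
  congr 1
  · exact Fin.sum_univ_eq_sum_range (fun a => spineValues t k x a ^ 2) t
  · rw [← Fin.sum_univ_eq_sum_range (fun b => ∑ p ∈ range k, branchValues x b p ^ 2)]
    exact sum_congr rfl fun b _ => Fin.sum_univ_eq_sum_range (fun p => branchValues x b p ^ 2) k

lemma attach_iff_eq_junction {t b i : ℕ} (hb : b < t + 2) :
    (b = 0 ∧ i = 0 ∨ 1 ≤ b ∧ b ≤ t ∧ i = (b - 1) * (0 + 1) ∨ b = t + 1 ∧ i = (t - 1) * (0 + 1))
      ↔ i = junction t b := by
  unfold junction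
  omega

lemma sum_adj_sq_uniformTree (ht : 1 ≤ t) (hk : 1 ≤ k) [DecidableRel (uniformTree 0 k t).Adj] :
    ∑ u, ∑ v, (if (uniformTree 0 k t).Adj u v then (x u - x v) ^ 2 else 0)
      = 2 * (pathEnergy (t - 1) (spineValues t k x) + ∑ b ∈ range (t + 2),
        ((spineValues t k x (junction t b) - branchValues x b 0) ^ 2
          + pathEnergy (k - 1) (branchValues x b))) := by
  classical
  rw [SimpleGraph.sum_ite_adj_eq_two_mul_of_eq_fromRel (uniformTree 0 k t) _ rfl
    (by rintro (i | ⟨b, p⟩) (j | ⟨b', p'⟩) <;> simp <;> omega) _ fun u v => by ring]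
  simp only [Fintype.sum_sum_type, Fintype.sum_prod_type, ← spineValues_val, ← branchValues_val]
  congr 1
  simp only [sum_add_distrib, if_false, sum_const_zero, zero_add,
    attach_iff_eq_junction (Fin.is_lt _)]
  set Z := spineValues t k x
  set Y := branchValues x
  have hJ : ∀ b, junction t b < t := fun b => by unfold junction; omega
  have hspine : ∑ i : Fin (t + (t - 1) * 0), ∑ j : Fin (t + (t - 1) * 0),
      (if (j : ℕ) = i + 1 then (Z i - Z j) ^ 2 else 0) = pathEnergy (t - 1) Z :=
    Fin.sum_sum_ite_val_eq_succ t fun a b => (Z a - Z b) ^ 2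
  have hattach : ∑ i : Fin (t + (t - 1) * 0), ∑ b : Fin (t + 2), ∑ p : Fin k,
      (if (p : ℕ) = 0 ∧ (i : ℕ) = junction t b then (Z i - Y b p) ^ 2 else 0)
      = ∑ b ∈ range (t + 2), (Z (junction t b) - Y b 0) ^ 2 := by
    rw [sum_comm, ← Fin.sum_univ_eq_sum_range (fun b => (Z (junction t b) - Y b 0) ^ 2)]
    refine sum_congr rfl fun b _ => ?_
    rw [sum_comm]
    simp only [ite_and, sum_ite_irrel, sum_const_zero]
    rw [Fin.sum_ite_val_eq_s13 k 0 fun p => ∑ i : Fin (t + (t - 1) * 0),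
      if (i : ℕ) = junction t b then (Z i - Y b p) ^ 2 else 0, if_pos (show 0 < k from hk)]
    exact (Fin.sum_ite_val_eq_s13 t _ fun a => (Z a - Y b 0) ^ 2).trans (if_pos (hJ b))
  have hbranch : ∑ b : Fin (t + 2), ∑ p : Fin k, ∑ b' : Fin (t + 2), ∑ p' : Fin k,
      (if b = b' ∧ (p' : ℕ) = p + 1 then (Y b p - Y b' p') ^ 2 else 0)
      = ∑ b ∈ range (t + 2), pathEnergy (k - 1) (Y b) := by
    rw [← Fin.sum_univ_eq_sum_range (fun b => pathEnergy (k - 1) (Y b))]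
    refine sum_congr rfl fun b _ => ?_
    simp only [ite_and, sum_ite_irrel, sum_const_zero, sum_ite_eq, mem_univ, if_true]
    exact Fin.sum_sum_ite_val_eq_succ k fun p q => (Y b p - Y b q) ^ 2
  rw [hspine, hattach, hbranch, add_assoc]

end Coordinates

lemma dotProduct_lapMatrix_mulVec_lt {t k : ℕ} (ht : 1 ≤ t) (hk : 1 ≤ k)
    [DecidableRel (uniformTree 0 k t).Adj] (x : Fin (t + (t - 1) * 0) ⊕ Fin (t + 2) × Fin k → ℝ)
    (hx : pairConstraints t (spineValues t k x) = 0) (hx0 : x ≠ 0) :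
    x ⬝ᵥ (uniformTree 0 k t).lapMatrix ℝ *ᵥ x < 4 * (x ⬝ᵥ x) := by
  have hpos : 0 < x ⬝ᵥ x := by simpa using dotProduct_self_star_pos_iff.mpr hx0
  rw [dotProduct_self_eq_spineValues_add_branchValues] at hpos ⊢
  have hneg := pathEnergy_sub_add_sum_branchForm_neg ht hk hx (branchValues x) hpos
  simp only [branchForm, sum_sub_distrib, sum_add_distrib, ← mul_sum] at hneg
  rw [← toLinearMap₂'_apply', SimpleGraph.lapMatrix_toLinearMap₂', sum_adj_sq_uniformTree x ht hk,
    sum_add_distrib]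
  linarith

end UniformTree

open UniformTree in
/-- for trunk length `m = 0` and `t ≥ 2` T-junctions, for every branch
length `k ≥ 1` the uniform tree `H_{0,k}` has at most `⌊(t+1)/2⌋` Laplacian
eigenvalues `≥ 4`. -/
theorem uniform_tree_trunk_zero_upper (t : ℕ) (ht : 2 ≤ t) :
    ∀ k : ℕ, 1 ≤ k → n4plus (uniformTree 0 k t) ≤ (t + 1) / 2 := by
  classical
  intro k hk
  set φ := pairConstraints t ∘ₗ spineValues t k
  have hker : Fintype.card (Fin (t + (t - 1) * 0) ⊕ Fin (t + 2) × Fin k)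
      ≤ Module.finrank ℝ (LinearMap.ker φ) + (t + 1) / 2 := by
    have hrange := (LinearMap.range φ).finrank_le
    rw [Module.finrank_fin_fun] at hrange
    rw [← Module.finrank_fintype_fun_eq_card (R := ℝ), ← φ.finrank_range_add_finrank_ker]
    omega
  have hcount :=
    (SimpleGraph.posSemidef_lapMatrix ℝ (uniformTree 0 k t)).1.card_eigenvalues_ge_add_finrank_le
      (LinearMap.ker φ) fun x hx hx0 => dotProduct_lapMatrix_mulVec_lt (by omega) hk x hx hx0
  unfold n4plus
  omega
end

section
/- Base case m = 0, t = 3: a tree of maximum degree 3 with exactly three degree-3 vertices forming a path of adjacent vertices (each consecutive pair adjacent) has at most two Laplacian eigenvalues greater than or equal to 4, and at least one Laplacian eigenvalue strictly greater than 4. -/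
open Finset Matrix

namespace Matrix.IsHermitian

variable {n : Type*} [Fintype n] [DecidableEq n] {A : Matrix n n ℝ} (hA : A.IsHermitian)

lemma eigenvectorUnitary_mulVec_dotProduct (a b : n → ℝ) :
    (hA.eigenvectorUnitary : Matrix n n ℝ) *ᵥ a ⬝ᵥ (hA.eigenvectorUnitary : Matrix n n ℝ) *ᵥ b
      = a ⬝ᵥ b := by
  have h : (hA.eigenvectorUnitary : Matrix n n ℝ)ᵀ * hA.eigenvectorUnitary = 1 := by
    rw [← conjTranspose_eq_transpose_of_trivial, ← star_eq_conjTranspose,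
      Unitary.coe_star_mul_self]
  rw [dotProduct_mulVec, ← mulVec_transpose, mulVec_mulVec, h, one_mulVec]

lemma dotProduct_mulVec_eigenvectorUnitary_mulVec (y : n → ℝ) :
    (hA.eigenvectorUnitary : Matrix n n ℝ) *ᵥ y ⬝ᵥ A *ᵥ (hA.eigenvectorUnitary : Matrix n n ℝ) *ᵥ y
      = ∑ i, hA.eigenvalues i * y i ^ 2 := by
  set U : Matrix n n ℝ := (hA.eigenvectorUnitary : Matrix n n ℝ)
  have hAU : A * U = U * diagonal hA.eigenvalues := by
    conv_lhs => rw [hA.spectral_theorem]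
    simp [U, Unitary.conjStarAlgAut_apply, mul_assoc]
  rw [mulVec_mulVec, hAU, ← mulVec_mulVec, eigenvectorUnitary_mulVec_dotProduct]
  simp only [dotProduct, mulVec_diagonal]
  exact sum_congr rfl fun i _ ↦ by ring

lemma exists_lt_eigenvalues_of_lt_dotProduct_mulVec {c : ℝ} (x : n → ℝ)
    (h : c * (x ⬝ᵥ x) < x ⬝ᵥ A *ᵥ x) : ∃ i, c < hA.eigenvalues i := by
  by_contra! hle
  set U : Matrix n n ℝ := (hA.eigenvectorUnitary : Matrix n n ℝ)
  obtain ⟨y, rfl⟩ : ∃ y, x = U *ᵥ y :=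
    ⟨star U *ᵥ x, by
      rw [mulVec_mulVec, Unitary.mul_star_self_of_mem hA.eigenvectorUnitary.2, one_mulVec]⟩
  rw [dotProduct_mulVec_eigenvectorUnitary_mulVec, eigenvectorUnitary_mulVec_dotProduct,
    dotProduct, mul_sum] at h
  exact h.not_ge <| sum_le_sum fun i _ ↦ by nlinarith [hle i, sq_nonneg (y i)]

lemma card_le_eigenvalues_le_finrank {E : Type*} [AddCommGroup E] [Module ℝ E]
    [FiniteDimensional ℝ E] (φ : (n → ℝ) →ₗ[ℝ] E) {c : ℝ}
    (h : ∀ x ∈ LinearMap.ker φ, x ≠ 0 → x ⬝ᵥ A *ᵥ x < c * (x ⬝ᵥ x)) :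
    #{i | c ≤ hA.eigenvalues i} ≤ Module.finrank ℝ E := by
  set T : Finset n := {i | c ≤ hA.eigenvalues i}
  set U : Matrix n n ℝ := (hA.eigenvectorUnitary : Matrix n n ℝ)
  set ι : (T → ℝ) →ₗ[ℝ] n → ℝ := Function.ExtendByZero.linearMap ℝ Subtype.val
  by_contra! hT
  obtain ⟨z, hz, hz0⟩ := Submodule.ne_bot_iff _ |>.mp <|
    LinearMap.ker_ne_bot_of_finrank_lt (f := φ ∘ₗ U.mulVecLin ∘ₗ ι) (by simpa using hT)
  set y := ι z
  have hy0 : y ≠ 0 := fun h0 ↦ hz0 <|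
    Function.extend_injective Subtype.val_injective _ (h0.trans (map_zero ι).symm)
  have hyT : ∀ i ∉ T, y i = 0 := fun i hi ↦
    Function.extend_apply' _ _ _ fun ⟨j, hj⟩ ↦ hi (hj ▸ j.2)
  have hx0 : U *ᵥ y ≠ 0 := fun h0 ↦ hy0 <| by
    rw [← one_mulVec y, ← Unitary.star_mul_self_of_mem hA.eigenvectorUnitary.2, ← mulVec_mulVec,
      h0, mulVec_zero]
  refine (h (U *ᵥ y) hz hx0).not_ge ?_
  rw [dotProduct_mulVec_eigenvectorUnitary_mulVec, eigenvectorUnitary_mulVec_dotProduct,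
    dotProduct, mul_sum]
  refine sum_le_sum fun i _ ↦ ?_
  by_cases hi : i ∈ T
  · nlinarith [(mem_filter.mp hi).2, sq_nonneg (y i)]
  · simp [hyT i hi]

end Matrix.IsHermitian

namespace SimpleGraph

lemma IsAcyclic.not_adj_of_adj_of_adj {V : Type*} {G : SimpleGraph V} (hG : G.IsAcyclic)
    {u v w : V} (huv : G.Adj u v) (hvw : G.Adj v w) : ¬G.Adj u w := by
  classical
  exact fun huw ↦ hG.cliqueFree le_rfl {u, v, w} (is3Clique_triple_iff.2 ⟨huv, huw, hvw⟩)

lemma Preconnected.exists_adj_add_ne_zero {V : Type*} [Fintype V] {G : SimpleGraph V}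
    (hG : G.Preconnected) {x : V → ℝ} (hx : x ≠ 0) {v : V} (hv : x v = 0) :
    ∃ i j, G.Adj i j ∧ x i + x j ≠ 0 := by
  classical
  by_contra! h
  have habs : ∀ i j, G.Reachable i j → |x i| = |x j| :=
    (lapMatrix_toLinearMap₂'_apply'_eq_zero_iff_forall_reachable G fun i ↦ |x i|).1 <|
      (lapMatrix_toLinearMap₂'_apply'_eq_zero_iff_forall_adj ℝ G _).2 fun i j hij ↦ by
        simp [eq_neg_of_add_eq_zero_left (h i j hij)]
  exact hx <| funext fun i ↦ abs_eq_zero.1 <| (habs i v (hG i v)).trans (by simp [hv])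

section Laplacian

variable {V : Type*} [Fintype V] [DecidableEq V] (G : SimpleGraph V) [DecidableRel G.Adj]

lemma dotProduct_lapMatrix_mulVec (x : V → ℝ) :
    x ⬝ᵥ G.lapMatrix ℝ *ᵥ x = (∑ i, ∑ j, if G.Adj i j then (x i - x j) ^ 2 else 0) / 2 := by
  rw [← toLinearMap₂'_apply', lapMatrix_toLinearMap₂']

lemma dotProduct_lapMatrix_mulVec_eq_sub (x : V → ℝ) :
    x ⬝ᵥ G.lapMatrix ℝ *ᵥ x = 2 * ∑ i, (G.degree i : ℝ) * x i ^ 2 -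
      (∑ i, ∑ j, if G.Adj i j then (x i + x j) ^ 2 else 0) / 2 := by
  have hDA : x ⬝ᵥ G.lapMatrix ℝ *ᵥ x =
      ∑ i, (G.degree i : ℝ) * x i ^ 2 - ∑ i, ∑ j, if G.Adj i j then x i * x j else 0 := by
    simp only [lapMatrix, sub_mulVec, dotProduct_sub, dotProduct_mulVec_degMatrix,
      dotProduct_mulVec_adjMatrix, mul_assoc, sq]
  have hsq : (∑ i, ∑ j, if G.Adj i j then (x i + x j) ^ 2 else 0) =
      (∑ i, ∑ j, if G.Adj i j then (x i - x j) ^ 2 else 0) +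
        4 * ∑ i, ∑ j, if G.Adj i j then x i * x j else 0 := by
    simp only [mul_sum, ← sum_add_distrib]
    refine sum_congr rfl fun i _ ↦ sum_congr rfl fun j _ ↦ ?_
    split_ifs <;> ring
  linarith [G.dotProduct_lapMatrix_mulVec x]

lemma sum_degree_mul_le (k : ℕ) {S : Finset V} (hS : ∀ i ∈ S, G.degree i ≤ k + 1)
    (hSc : ∀ i ∉ S, G.degree i ≤ k) {f : V → ℝ} (hf : ∀ i, 0 ≤ f i) :
    ∑ i, (G.degree i : ℝ) * f i ≤ k * ∑ i, f i + ∑ i ∈ S, f i := by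
  calc ∑ i, (G.degree i : ℝ) * f i ≤ ∑ i, (k * f i + if i ∈ S then f i else 0) := by
        refine sum_le_sum fun i _ ↦ ?_
        by_cases hi : i ∈ S
        · have : (G.degree i : ℝ) ≤ k + 1 := by exact_mod_cast hS i hi
          simp only [hi, if_true]
          nlinarith [hf i]
        · have : (G.degree i : ℝ) ≤ k := by exact_mod_cast hSc i hi
          simp only [hi, if_false, add_zero]
          nlinarith [hf i]
    _ = k * ∑ i, f i + ∑ i ∈ S, f i := by
        rw [sum_add_distrib, ← mul_sum, ← sum_filter, filter_mem_eq_inter, univ_inter]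

lemma dotProduct_lapMatrix_mulVec_lt_four_mul (hG : G.Preconnected)
    (hdeg : ∀ i, G.degree i ≤ 3) {u v w : V}
    (honly : ∀ i, G.degree i = 3 → i = u ∨ i = v ∨ i = w)
    (huv : G.Adj u v) (hvw : G.Adj v w) (huw : u ≠ w) {x : V → ℝ} (hx : x ≠ 0)
    (hxuv : x u = x v) (hxvw : x v = x w) :
    x ⬝ᵥ G.lapMatrix ℝ *ᵥ x < 4 * (x ⬝ᵥ x) := by
  set F : V → V → ℝ := fun i j ↦ if G.Adj i j then (x i + x j) ^ 2 else 0
  have hF : ∀ i j, 0 ≤ F i j := fun i j ↦ by dsimp only [F]; split_ifs <;> positivity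
  have hrow : ∀ i (s : Finset V), ∑ j ∈ s, F i j ≤ ∑ j, F i j := fun i _ ↦
    sum_le_univ_sum_of_nonneg (hF i)
  have hQ : ∀ s : Finset V, ∑ i ∈ s, ∑ j, F i j ≤ ∑ i, ∑ j, F i j := fun _ ↦
    sum_le_univ_sum_of_nonneg fun i ↦ sum_nonneg fun j _ ↦ hF i j
  have hdegsum : ∑ i, (G.degree i : ℝ) * x i ^ 2 ≤ 2 * ∑ i, x i ^ 2 + 3 * x v ^ 2 := by
    have := G.sum_degree_mul_le 2 (S := {u, v, w}) (fun i _ ↦ hdeg i)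
      (fun i hi ↦ by
        have := hdeg i
        have : G.degree i ≠ 3 := fun h3 ↦ hi (by rcases honly i h3 with rfl | rfl | rfl <;> simp)
        omega)
      (f := fun i ↦ x i ^ 2) fun i ↦ sq_nonneg _
    rwa [sum_insert (by simp [huv.ne, huw]), sum_insert (by simp [hvw.ne]), sum_singleton,
      hxuv, ← hxvw, Nat.cast_ofNat, show x v ^ 2 + (x v ^ 2 + x v ^ 2) = 3 * x v ^ 2 by ring]
      at this
  have hxx : x ⬝ᵥ x = ∑ i, x i ^ 2 := sum_congr rfl fun i _ ↦ (sq (x i)).symm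
  rw [dotProduct_lapMatrix_mulVec_eq_sub, hxx]
  rcases eq_or_ne (x v) 0 with h0 | h0
  · obtain ⟨i, j, hij, hne⟩ := hG.exists_adj_add_ne_zero hx h0
    have hpos : 0 < F i j := by simp only [F, if_pos hij]; positivity
    have : F i j ≤ ∑ i, ∑ j, F i j := by
      simpa using (hrow i {j}).trans (by simpa using hQ {i})
    nlinarith
  · have hFuv : F u v = 4 * x v ^ 2 := by simp only [F, if_pos huv, hxuv]; ring
    have hFv : F v u + F v w = 8 * x v ^ 2 := by
      simp only [F, if_pos huv.symm, if_pos hvw, hxuv, ← hxvw]; ring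
    have hFwv : F w v = 4 * x v ^ 2 := by simp only [F, if_pos hvw.symm, hxvw]; ring
    have : 16 * x v ^ 2 ≤ ∑ i, ∑ j, F i j := by
      have hrows := hQ {u, v, w}
      rw [sum_insert (by simp [huv.ne, huw]), sum_insert (by simp [hvw.ne]), sum_singleton]
        at hrows
      have hrow_u := hrow u {v}
      have hrow_v := hrow v {u, w}
      have hrow_w := hrow w {v}
      rw [sum_singleton] at hrow_u hrow_w
      rw [sum_pair huw] at hrow_v
      linarith
    nlinarith [sq_pos_of_ne_zero h0]

lemma exists_degree_add_one_mul_lt_dotProduct_lapMatrix_mulVec {u v w : V} (huv : G.Adj u v)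
    (hvw : G.Adj v w) (hwu : w ≠ u) (huw : ¬G.Adj u w) :
    ∃ x : V → ℝ, (G.degree u + 1 : ℝ) * (x ⬝ᵥ x) < x ⬝ᵥ G.lapMatrix ℝ *ᵥ x := by
  set d : ℝ := (G.degree u : ℝ)
  set x : V → ℝ := fun z ↦ if z = u then d else if G.Adj u z then -1 else 0
  refine ⟨x, ?_⟩
  have hxu : x u = d := if_pos rfl
  have hxN : ∀ z, G.Adj u z → x z = -1 := fun z hz ↦ by simp [x, hz, hz.ne']
  have hxw : x w = 0 := by simp [x, hwu, huw]
  have hdeg : ∑ z, (if G.Adj u z then (1 : ℝ) else 0) = d := (G.degree_eq_sum_if_adj u).symm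
  have hxx : x ⬝ᵥ x = d ^ 2 + d := by
    have : ∀ z, x z * x z = (if z = u then d ^ 2 else 0) + if G.Adj u z then 1 else 0 := by
      intro z
      by_cases hz : z = u
      · subst hz; simp [x]; ring
      · by_cases h : G.Adj u z <;> simp [x, hz, h]
    simp only [dotProduct, this, sum_add_distrib, sum_ite_eq', mem_univ, if_true, hdeg]
  set F : V → V → ℝ := fun i j ↦ if G.Adj i j then (x i - x j) ^ 2 else 0
  have hF : ∀ i j, 0 ≤ F i j := fun i j ↦ by dsimp only [F]; split_ifs <;> positivity
  have hrow_u : ∑ j, F u j = d * (d + 1) ^ 2 := by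
    have : ∀ j, F u j = (d + 1) ^ 2 * if G.Adj u j then 1 else 0 := fun j ↦ by
      by_cases h : G.Adj u j <;> simp [F, h, hxu, hxN]
    simp only [this, ← mul_sum, hdeg]; ring
  have hrow_N : ∀ j ∈ G.neighborFinset u,
      (d + 1) ^ 2 + (if j = v then 1 else 0) ≤ ∑ k, F j k := by
    intro j hj
    rw [mem_neighborFinset] at hj
    have hju : F j u = (d + 1) ^ 2 := by simp only [F, if_pos hj.symm, hxN j hj, hxu]; ring
    by_cases hjv : j = v
    · subst hjv
      have hjw : F j w = 1 := by simp only [F, if_pos hvw, hxN j hj, hxw]; ring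
      simpa [sum_pair hwu.symm, hju, hjw] using sum_le_univ_sum_of_nonneg (s := {u, w}) (hF j)
    · simpa [hjv, hju] using sum_le_univ_sum_of_nonneg (s := {u}) (hF j)
  have htotal : 2 * d * (d + 1) ^ 2 + 1 ≤ ∑ i, ∑ j, F i j := by
    calc 2 * d * (d + 1) ^ 2 + 1
        = ∑ j, F u j + ∑ j ∈ G.neighborFinset u, ((d + 1) ^ 2 + if j = v then 1 else 0) := by
          rw [hrow_u, sum_add_distrib, sum_const, card_neighborFinset_eq_degree, sum_ite_eq',
            if_pos ((mem_neighborFinset _ _ _).2 huv), nsmul_eq_mul]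
          ring
      _ ≤ ∑ i ∈ insert u (G.neighborFinset u), ∑ j, F i j := by
          rw [sum_insert (notMem_neighborFinset_self _ _)]
          exact add_le_add_right (sum_le_sum hrow_N) _
      _ ≤ ∑ i, ∑ j, F i j := sum_le_univ_sum_of_nonneg fun i ↦ sum_nonneg fun j _ ↦ hF i j
  rw [dotProduct_lapMatrix_mulVec, hxx]
  nlinarith

lemma exists_degree_add_one_lt_eigenvalues_lapMatrix {u v w : V} (huv : G.Adj u v)
    (hvw : G.Adj v w) (hwu : w ≠ u) (huw : ¬G.Adj u w) :
    ∃ i, (G.degree u + 1 : ℝ) < (G.isHermitian_lapMatrix ℝ).eigenvalues i :=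
  have ⟨x, hx⟩ := G.exists_degree_add_one_mul_lt_dotProduct_lapMatrix_mulVec huv hvw hwu huw
  (G.isHermitian_lapMatrix ℝ).exists_lt_eigenvalues_of_lt_dotProduct_mulVec x hx

end Laplacian

end SimpleGraph

theorem base_case_three_junctions_general {V : Type*} [Fintype V] [DecidableEq V]
    (G : SimpleGraph V) [DecidableRel G.Adj] (hT : G.IsTree)
    (hdeg : ∀ x : V, G.degree x ≤ 3)
    (u v w : V) (hu : G.degree u = 3)
    (honly : ∀ x : V, G.degree x = 3 → x = u ∨ x = v ∨ x = w)
    (huv : G.Adj u v) (hvw : G.Adj v w) (huw : u ≠ w) :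
    n4plus G ≤ 2 ∧
      ∃ i, 4 < (SimpleGraph.posSemidef_lapMatrix ℝ G).1.eigenvalues i := by
  refine ⟨?_, ?_⟩
  · let π : V → (V → ℝ) →ₗ[ℝ] ℝ := LinearMap.proj
    let φ : (V → ℝ) →ₗ[ℝ] ℝ × ℝ := (π u - π v).prod (π v - π w)
    have hφ : ∀ x ∈ LinearMap.ker φ, x u = x v ∧ x v = x w := fun x hx ↦ by
      simpa [φ, π, sub_eq_zero] using hx
    have hcard := (G.isHermitian_lapMatrix ℝ).card_le_eigenvalues_le_finrank φ fun x hx hx0 ↦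
      G.dotProduct_lapMatrix_mulVec_lt_four_mul hT.connected.preconnected hdeg honly huv hvw
        huw hx0 (hφ x hx).1 (hφ x hx).2
    unfold n4plus
    convert hcard using 3
    · congr! -- `n4plus` uses the classical `DecidableRel G.Adj`
    · simp
  · obtain ⟨i, hi⟩ := G.exists_degree_add_one_lt_eigenvalues_lapMatrix huv hvw huw.symm
      (hT.isAcyclic.not_adj_of_adj_of_adj huv hvw)
    exact ⟨i, by norm_num [hu] at hi; exact hi⟩

/-- base case `m = 0`, `t = 3`: a tree of maximum degree 3 with exactly
three degree-3 vertices `u, v, w`, pairwise consecutive (`u ~ v`, `v ~ w`), has at most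
two Laplacian eigenvalues `≥ 4` and at least one Laplacian eigenvalue `> 4`. -/
theorem base_case_three_junctions {V : Type*} [Fintype V] [DecidableEq V]
    (G : SimpleGraph V) [DecidableRel G.Adj] (hT : G.IsTree)
    (hdeg : ∀ x : V, G.degree x ≤ 3)
    (u v w : V) (hu : G.degree u = 3) (hv : G.degree v = 3) (hw : G.degree w = 3)
    (honly : ∀ x : V, G.degree x = 3 → x = u ∨ x = v ∨ x = w)
    (huv : G.Adj u v) (hvw : G.Adj v w) (huw : u ≠ w) :
    n4plus G ≤ 2 ∧
      ∃ i, 4 < (SimpleGraph.posSemidef_lapMatrix ℝ G).1.eigenvalues i :=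
  base_case_three_junctions_general G hT hdeg u v w hu honly huv hvw huw
end
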